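/- arXiv:1710.07688 — 8 statements merged into one kernel-verified Lean document; each statement's English description precedes it below -/
import Mathlib

section
/- Let p(t) = Σ_{n=0}^N a_n t^n be a polynomial with nonnegative real coefficients, and let k be a nonnegative integer. If t^k ≤ p(t) for all t > 0, then either a_k ≥ c_N, or there exist integers n_1 < k < n_2 with 0 ≤ n_1, n_2 ≤ N such that a_{n_1}^{(n_2-k)/(n_2-n_1)} · a_{n_2}^{(k-n_1)/(n_2-n_1)} ≥ c_N, where c_N > 0 is a constant depending only on N. -/
/-- If a polynomial with nonnegative coefficients dominates `t^k` on `(0,∞)`, then either the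
`k`-th coefficient is bounded below, or a geometric mean of two straddling coefficients is. -/
theorem stmt0 (N : ℕ) :
    ∃ c : ℝ, 0 < c ∧ ∀ (a : ℕ → ℝ) (k : ℕ),
      (∀ n, 0 ≤ a n) →
      (∀ t : ℝ, 0 < t → t ^ k ≤ ∑ n ∈ Finset.range (N + 1), a n * t ^ n) →
      (c ≤ a k ∨ ∃ n₁ n₂ : ℕ, n₁ < k ∧ k < n₂ ∧ n₂ ≤ N ∧
        c ≤ (a n₁) ^ ((n₂ - k : ℝ) / ((n₂ : ℝ) - n₁)) *
            (a n₂) ^ ((k - n₁ : ℝ) / ((n₂ : ℝ) - n₁))) := by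
  refine ⟨1 / (4 * (N + 1)), by positivity, ?_⟩
  intro a k ha hp
  by_contra hcon
  push_neg at hcon
  obtain ⟨hk, hgm⟩ := hcon
  set C : ℝ := 2 * ((N : ℝ) + 1) with hCdef
  have hCpos : (0:ℝ) < C := by positivity
  have hne : (Finset.range (N + 1)).Nonempty := Finset.nonempty_range_add_one
  set f : ℕ → ℝ := fun n => if n < k then (C * a n) ^ (((k - n : ℕ) : ℝ))⁻¹ else 0 with hfdef
  have hf0 : ∀ n, 0 ≤ f n := by
    intro n
    simp only [hfdef]
    split
    · exact Real.rpow_nonneg (mul_nonneg hCpos.le (ha n)) _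
    · exact le_refl 0
  set T : ℝ := (Finset.range (N + 1)).sup' hne f with hTdef
  have hT0 : (0:ℝ) ≤ T := le_trans (hf0 0) (Finset.le_sup' f (by simp))
  have hfT : ∀ n ∈ Finset.range (N + 1), f n ≤ T := fun n hn => Finset.le_sup' f hn
  set g : ℕ → ℝ := fun n =>
    if k < n ∧ 0 < a n then ((C * a n)⁻¹) ^ (((n - k : ℕ) : ℝ))⁻¹ else T + 1 with hgdef
  have key : ∀ n ∈ Finset.range (N + 1), ∀ m ∈ Finset.range (N + 1), f n < g m := by
    intro n hn m hm
    simp only [hgdef]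
    split
    case isFalse => exact lt_of_le_of_lt (hfT n hn) (by linarith)
    case isTrue h =>
      obtain ⟨hkm, ham⟩ := h
      have hYpos : (0:ℝ) < ((C * a m)⁻¹) ^ (((m - k : ℕ) : ℝ))⁻¹ :=
        Real.rpow_pos_of_pos (by positivity) _
      simp only [hfdef]
      split
      case isFalse => exact hYpos
      case isTrue hnk =>
        by_cases han : a n = 0
        · rw [han, mul_zero, Real.zero_rpow (inv_ne_zero (Nat.cast_ne_zero.mpr (by omega)))]
          exact hYpos
        have han' : 0 < a n := lt_of_le_of_ne (ha n) (Ne.symm han)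
        set p : ℕ := k - n with hpdef
        set q : ℕ := m - k with hqdef
        have hp1 : 1 ≤ p := by omega
        have hq1 : 1 ≤ q := by omega
        have hmn : n < m := lt_trans hnk hkm
        have hgm2 := hgm n m hnk hkm (Nat.lt_succ_iff.mp (Finset.mem_range.mp hm))
        have hcast1 : ((m:ℝ) - k) = ((q : ℕ) : ℝ) := by
          rw [hqdef, Nat.cast_sub hkm.le]
        have hcast2 : ((k:ℝ) - n) = ((p : ℕ) : ℝ) := by
          rw [hpdef, Nat.cast_sub hnk.le]
        have hcast3 : ((m:ℝ) - n) = (((p + q) : ℕ) : ℝ) := by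
          have : p + q = m - n := by omega
          rw [this, Nat.cast_sub hmn.le]
        have hmn0 : ((m:ℝ) - n) ≠ 0 := by
          have : (n:ℝ) < (m:ℝ) := by exact_mod_cast hmn
          linarith
        -- Step A : the geometric mean raised to power p+q
        have stepA : ((a n) ^ (((m:ℝ) - k) / ((m:ℝ) - n)) *
            (a m) ^ (((k:ℝ) - n) / ((m:ℝ) - n))) ^ (p + q)
            = a n ^ q * a m ^ p := by
          rw [mul_pow,
            ← Real.rpow_natCast ((a n) ^ (((m:ℝ) - k) / ((m:ℝ) - n))) (p + q),
            ← Real.rpow_natCast ((a m) ^ (((k:ℝ) - n) / ((m:ℝ) - n))) (p + q),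
            ← Real.rpow_mul (ha n), ← Real.rpow_mul (ha m),
            ← Real.rpow_natCast (a n) q, ← Real.rpow_natCast (a m) p]
          congr 2
          · rw [← hcast3, div_mul_cancel₀ _ hmn0, hcast1]
          · rw [← hcast3, div_mul_cancel₀ _ hmn0, hcast2]
        have hgmnn : 0 ≤ (a n) ^ (((m:ℝ) - k) / ((m:ℝ) - n)) *
            (a m) ^ (((k:ℝ) - n) / ((m:ℝ) - n)) :=
          mul_nonneg (Real.rpow_nonneg (ha n) _) (Real.rpow_nonneg (ha m) _)
        have stepB : a n ^ q * a m ^ p < (1 / (4 * ((N:ℝ) + 1))) ^ (p + q) := by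
          rw [← stepA]
          exact pow_lt_pow_left₀ hgm2 hgmnn (by omega)
        have hCc : C * (1 / (4 * ((N:ℝ) + 1))) = 1 / 2 := by
          rw [hCdef]; field_simp; ring
        have stepC : (C * a n) ^ q * (C * a m) ^ p < 1 := by
          have h1 : (C * a n) ^ q * (C * a m) ^ p = C ^ (p + q) * (a n ^ q * a m ^ p) := by
            rw [mul_pow C, mul_pow C, pow_add]; ring
          rw [h1]
          calc C ^ (p + q) * (a n ^ q * a m ^ p)
              < C ^ (p + q) * (1 / (4 * ((N:ℝ) + 1))) ^ (p + q) :=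
                mul_lt_mul_of_pos_left stepB (pow_pos hCpos _)
            _ = (C * (1 / (4 * ((N:ℝ) + 1)))) ^ (p + q) := (mul_pow C _ _).symm
            _ = (1 / 2 : ℝ) ^ (p + q) := by rw [hCc]
            _ < 1 := pow_lt_one₀ (by norm_num) (by norm_num) (by omega)
        -- raise both sides to the (p*q)-th power
        have hXpq : ((C * a n) ^ ((p : ℝ))⁻¹) ^ (p * q) = (C * a n) ^ q := by
          rw [pow_mul, Real.rpow_inv_natCast_pow (by positivity) (by omega)]
        have hYpq : (((C * a m)⁻¹) ^ ((q : ℝ))⁻¹) ^ (p * q) = ((C * a m) ^ p)⁻¹ := by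
          rw [pow_mul', Real.rpow_inv_natCast_pow (by positivity) (by omega), inv_pow]
        have hlt : ((C * a n) ^ ((p : ℝ))⁻¹) ^ (p * q)
            < (((C * a m)⁻¹) ^ ((q : ℝ))⁻¹) ^ (p * q) := by
          rw [hXpq, hYpq, ← one_div, lt_div_iff₀ (by positivity)]
          exact stepC
        exact lt_of_pow_lt_pow_left₀ (p * q) (le_of_lt (Real.rpow_pos_of_pos (by positivity) _)) hlt
  set t : ℝ := (Finset.range (N + 1)).inf' hne g with htdef
  have hTt : T < t :=
    (Finset.lt_inf'_iff hne).mpr fun m hm =>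
      (Finset.sup'_lt_iff hne).mpr fun n hn => key n hn m hm
  have htpos : 0 < t := by
    refine (Finset.lt_inf'_iff hne).mpr fun m hm => ?_
    simp only [hgdef]
    split
    case isTrue h => exact Real.rpow_pos_of_pos (inv_pos.mpr (mul_pos hCpos h.2)) _
    case isFalse => linarith
  have main : ∀ n ∈ Finset.range (N + 1), a n * t ^ n ≤ t ^ k / C := by
    intro n hn
    rcases lt_trichotomy n k with hnk | hnk | hnk
    · by_cases han : a n = 0
      · rw [han, zero_mul]; positivity
      have han' : 0 < a n := lt_of_le_of_ne (ha n) (Ne.symm han)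
      have hfn : f n = (C * a n) ^ (((k - n : ℕ) : ℝ))⁻¹ := by
        simp only [hfdef]; rw [if_pos hnk]
      have hft : f n < t := lt_of_le_of_lt (hfT n hn) hTt
      have h1 : C * a n < t ^ (k - n) := by
        have := pow_lt_pow_left₀ hft (hf0 n) (n := k - n) (by omega)
        rwa [hfn, Real.rpow_inv_natCast_pow (by positivity) (by omega)] at this
      rw [le_div_iff₀ hCpos]
      calc a n * t ^ n * C = t ^ n * (C * a n) := by ring
        _ ≤ t ^ n * t ^ (k - n) :=
            mul_le_mul_of_nonneg_left h1.le (pow_pos htpos n).le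
        _ = t ^ k := by rw [← pow_add]; congr 1; omega
    · subst hnk
      rw [le_div_iff₀ hCpos]
      have h1 : a n * (4 * ((N:ℝ) + 1)) < 1 := (lt_div_iff₀ (by positivity)).mp hk
      have h2 := pow_pos htpos n
      have hx : 0 ≤ a n * (2 * ((N:ℝ) + 1)) := mul_nonneg (ha n) (by positivity)
      have h3 : a n * C ≤ 1 := by rw [hCdef]; linarith
      calc a n * t ^ n * C = t ^ n * (a n * C) := by ring
        _ ≤ t ^ n * 1 := mul_le_mul_of_nonneg_left h3 h2.le
        _ = t ^ n := mul_one _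
    · by_cases han : a n = 0
      · rw [han, zero_mul]; positivity
      have han' : 0 < a n := lt_of_le_of_ne (ha n) (Ne.symm han)
      have hgn : g n = ((C * a n)⁻¹) ^ (((n - k : ℕ) : ℝ))⁻¹ := by
        simp only [hgdef]; rw [if_pos ⟨hnk, han'⟩]
      have htg : t ≤ g n := Finset.inf'_le g hn
      have h2 : t ^ (n - k) ≤ (C * a n)⁻¹ := by
        have := pow_le_pow_left₀ htpos.le htg (n - k)
        rwa [hgn, Real.rpow_inv_natCast_pow (by positivity) (by omega)] at this
      have h3 : t ^ (n - k) * (C * a n) ≤ 1 :=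
        (le_div_iff₀ (by positivity)).mp (by rwa [inv_eq_one_div] at h2)
      rw [le_div_iff₀ hCpos]
      have hpow : t ^ n = t ^ k * t ^ (n - k) := by rw [← pow_add]; congr 1; omega
      calc a n * t ^ n * C = t ^ k * (t ^ (n - k) * (C * a n)) := by
            rw [hpow]; ring
        _ ≤ t ^ k * 1 := mul_le_mul_of_nonneg_left h3 (pow_pos htpos k).le
        _ = t ^ k := mul_one _
  have hsum : ∑ n ∈ Finset.range (N + 1), a n * t ^ n
      ≤ ∑ n ∈ Finset.range (N + 1), t ^ k / C := Finset.sum_le_sum main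
  rw [Finset.sum_const, Finset.card_range, nsmul_eq_mul] at hsum
  have hhalf : ((N + 1 : ℕ) : ℝ) * (t ^ k / C) = t ^ k / 2 := by
    rw [hCdef]; push_cast; field_simp
  rw [hhalf] at hsum
  have h5 := hp t htpos
  have h6 := pow_pos htpos k
  linarith
end

section
/- Let {E^k}_{k=1}^K be a finite collection of measurable subsets of ℝ^d with union E of finite measure, and let M ≥ 2 be an integer. Then Σ_k |E^k| ≤ C_M ( |E| + |E|^{(M-1)/M} ( Σ_{k_1 < k_2 < ... < k_M} |E^{k_1} ∩ ... ∩ E^{k_M}| )^{1/M} ), where C_M depends only on M. -/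
/-!
Let `N x` be the number of sets `E k` containing `x`. Then `∑ |E k| = ∫ N` and
`∑_{|s| = M} |⋂_{i ∈ s} E i| = ∫ (N choose M)`. Since `n ≤ 2M (n choose M)^(1/M)` once `n ≥ 2M`,
on `E = ⋃ E k` we have `N ≤ 2M + 2M (N choose M)^(1/M)`, and Hölder's inequality on `E` bounds
`∫_E (N choose M)^(1/M)` by `|E|^((M-1)/M) (∫ N choose M)^(1/M)`.
-/

open MeasureTheory ENNReal Finset

lemma Nat.pow_le_two_mul_pow_mul_choose {M n : ℕ} (h : 2 * M ≤ n) :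
    n ^ M ≤ (2 * M) ^ M * n.choose M :=
  calc n ^ M = ∏ _i ∈ range M, n := by rw [prod_const, card_range]
    _ ≤ ∏ i ∈ range M, 2 * (n - i) :=
        prod_le_prod' fun i hi => by have := mem_range.mp hi; omega
    _ = 2 ^ M * n.descFactorial M := by
        rw [prod_mul_distrib, prod_const, card_range, Nat.descFactorial_eq_prod_range]
    _ = 2 ^ M * (M.factorial * n.choose M) := by rw [Nat.descFactorial_eq_factorial_mul_choose]
    _ ≤ 2 ^ M * (M ^ M * n.choose M) := by gcongr; exact Nat.factorial_le_pow M
    _ = (2 * M) ^ M * n.choose M := by ring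

lemma natCast_le_two_mul_add_two_mul_choose_rpow {M : ℕ} (hM : M ≠ 0) (n : ℕ) :
    (n : ℝ≥0∞) ≤ 2 * M + 2 * M * (n.choose M : ℝ≥0∞) ^ ((1 : ℝ) / M) := by
  rcases le_or_gt n (2 * M) with h | h
  · exact le_add_right (by exact_mod_cast h)
  refine le_add_left ?_
  have hM' : (M : ℝ) ≠ 0 := by exact_mod_cast hM
  have hpow : (n : ℝ≥0∞) ^ (M : ℝ) ≤ (2 * M : ℝ≥0∞) ^ (M : ℝ) * (n.choose M : ℝ≥0∞) := by
    rw [rpow_natCast, rpow_natCast]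
    exact_mod_cast Nat.pow_le_two_mul_pow_mul_choose h.le
  calc (n : ℝ≥0∞) = ((n : ℝ≥0∞) ^ (M : ℝ)) ^ ((1 : ℝ) / M) := by
        rw [← rpow_mul, mul_one_div_cancel hM', rpow_one]
    _ ≤ ((2 * M : ℝ≥0∞) ^ (M : ℝ) * (n.choose M : ℝ≥0∞)) ^ ((1 : ℝ) / M) := by gcongr
    _ = 2 * M * (n.choose M : ℝ≥0∞) ^ ((1 : ℝ) / M) := by
        rw [mul_rpow_of_nonneg _ _ (by positivity), ← rpow_mul, mul_one_div_cancel hM', rpow_one]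

lemma setLIntegral_rpow_le_measure_rpow_mul {α : Type*} [MeasurableSpace α] {μ : Measure α}
    {p q : ℝ} (hp : 0 ≤ p) (hq : 0 ≤ q) (hpq : p + q = 1) {g : α → ℝ≥0∞}
    (hg : AEMeasurable g μ) (s : Set α) :
    ∫⁻ x in s, g x ^ q ∂μ ≤ μ s ^ p * (∫⁻ x, g x ∂μ) ^ q :=
  calc ∫⁻ x in s, g x ^ q ∂μ = ∫⁻ x in s, (fun _ => (1 : ℝ≥0∞)) x ^ p * g x ^ q ∂μ := by
        simp only [one_rpow, one_mul]
    _ ≤ (∫⁻ _ in s, 1 ∂μ) ^ p * (∫⁻ x in s, g x ∂μ) ^ q :=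
        lintegral_mul_norm_pow_le aemeasurable_const hg.restrict hp hq hpq
    _ ≤ μ s ^ p * (∫⁻ x, g x ∂μ) ^ q := by
        rw [setLIntegral_one]; gcongr; exact Measure.restrict_le_self

section CoverCount

variable {Ω ι : Type*} [Fintype ι] (E : ι → Set Ω)

open Classical in
noncomputable def coverCount (x : Ω) : ℕ := #{k | x ∈ E k}

lemma coverCount_eq_sum_indicator (x : Ω) :
    (coverCount E x : ℝ≥0∞) = ∑ k, (E k).indicator 1 x := by
  classical
  simp only [coverCount, Set.indicator_apply, Pi.one_apply, sum_boole]

lemma choose_coverCount_eq_sum_indicator (M : ℕ) (x : Ω) :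
    ((coverCount E x).choose M : ℝ≥0∞) =
      ∑ s ∈ powersetCard M univ, (⋂ i ∈ s, E i).indicator 1 x := by
  classical
  set A : Finset ι := {k | x ∈ E k}
  have hmem (s : Finset ι) : x ∈ ⋂ i ∈ s, E i ↔ s ⊆ A := by
    simp [A, Set.mem_iInter, subset_iff]
  have hfilter : {s ∈ powersetCard M (univ : Finset ι) | s ⊆ A} = powersetCard M A := by
    ext s
    simp only [mem_filter, mem_powersetCard, subset_univ, true_and]
    tauto
  simp only [Set.indicator_apply, hmem, Pi.one_apply, sum_boole, hfilter, card_powersetCard]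
  congr

lemma coverCount_eq_zero_of_notMem_iUnion {x : Ω} (hx : x ∉ ⋃ k, E k) :
    coverCount E x = 0 := by
  classical
  simp only [coverCount, card_eq_zero, filter_eq_empty_iff]
  exact fun k _ hk => hx (Set.mem_iUnion_of_mem k hk)

variable [MeasurableSpace Ω] {E} (hE : ∀ k, MeasurableSet (E k))
include hE

lemma measurable_coverCount : Measurable (coverCount E) := by
  classical
  have : coverCount E = fun x => ∑ k, if x ∈ E k then 1 else 0 := by
    funext x; simp only [coverCount, sum_boole, Nat.cast_id]
  rw [this]
  exact Finset.measurable_sum _ fun k _ => Measurable.ite (hE k) measurable_const measurable_const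

lemma lintegral_coverCount (μ : Measure Ω) :
    ∫⁻ x, (coverCount E x : ℝ≥0∞) ∂μ = ∑ k, μ (E k) := by
  simp_rw [coverCount_eq_sum_indicator]
  rw [lintegral_finsetSum _ fun k _ => measurable_one.indicator (hE k)]
  simp_rw [lintegral_indicator_one (hE _)]

lemma lintegral_choose_coverCount (μ : Measure Ω) (M : ℕ) :
    ∫⁻ x, ((coverCount E x).choose M : ℝ≥0∞) ∂μ =
      ∑ s ∈ powersetCard M univ, μ (⋂ i ∈ s, E i) := by
  have hmeas (s : Finset ι) : MeasurableSet (⋂ i ∈ s, E i) :=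
    .biInter s.countable_toSet fun i _ => hE i
  simp_rw [choose_coverCount_eq_sum_indicator]
  rw [lintegral_finsetSum _ fun s _ => measurable_one.indicator (hmeas s)]
  simp_rw [lintegral_indicator_one (hmeas _)]

end CoverCount

section Bound

variable {Ω ι : Type*} [MeasurableSpace Ω] [Fintype ι] {E : ι → Set Ω}

theorem sum_measure_le_two_mul_measure_iUnion_add_rpow_sum_measure_iInter
    (μ : Measure Ω) {M : ℕ} (hM : M ≠ 0) (hE : ∀ k, MeasurableSet (E k)) :
    ∑ k, μ (E k) ≤ 2 * M * (μ (⋃ k, E k) + μ (⋃ k, E k) ^ (((M : ℝ) - 1) / M) *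
      (∑ s ∈ powersetCard M univ, μ (⋂ i ∈ s, E i)) ^ ((1 : ℝ) / M)) := by
  set U := ⋃ k, E k
  have hexp : 0 ≤ ((M : ℝ) - 1) / M :=
    div_nonneg (by simpa [Nat.one_le_iff_ne_zero]) M.cast_nonneg
  have hsupport : (fun x => (coverCount E x : ℝ≥0∞)).support ⊆ U := fun x hx => by
    by_contra hxU
    exact hx (by simp [coverCount_eq_zero_of_notMem_iUnion E hxU])
  have hchoose : Measurable fun x => ((coverCount E x).choose M : ℝ≥0∞) :=
    (measurable_from_top (f := fun n : ℕ => (n.choose M : ℝ≥0∞))).comp (measurable_coverCount hE)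
  calc ∑ k, μ (E k) = ∫⁻ x in U, (coverCount E x : ℝ≥0∞) ∂μ := by
        rw [setLIntegral_eq_of_support_subset hsupport, lintegral_coverCount hE]
    _ ≤ ∫⁻ x in U, 2 * M + 2 * M * ((coverCount E x).choose M : ℝ≥0∞) ^ ((1 : ℝ) / M) ∂μ :=
        lintegral_mono fun x => natCast_le_two_mul_add_two_mul_choose_rpow hM _
    _ = 2 * M * μ U +
          2 * M * ∫⁻ x in U, ((coverCount E x).choose M : ℝ≥0∞) ^ ((1 : ℝ) / M) ∂μ := by
        rw [lintegral_add_left measurable_const, setLIntegral_const,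
          lintegral_const_mul' _ _ (by finiteness)]
    _ ≤ 2 * M * μ U + 2 * M * (μ U ^ (((M : ℝ) - 1) / M) *
          (∫⁻ x, ((coverCount E x).choose M : ℝ≥0∞) ∂μ) ^ ((1 : ℝ) / M)) := by
        gcongr
        exact setLIntegral_rpow_le_measure_rpow_mul hexp (by positivity)
          (by field_simp; ring) hchoose.aemeasurable U
    _ = _ := by rw [lintegral_choose_coverCount hE]; ring

theorem sum_measure_toReal_le_two_mul_measure_iUnion_add_rpow_sum_measure_iInter
    (μ : Measure Ω) {M : ℕ} (hM : M ≠ 0) (hE : ∀ k, MeasurableSet (E k))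
    (hU : μ (⋃ k, E k) < ⊤) :
    ∑ k, (μ (E k)).toReal ≤ 2 * M * ((μ (⋃ k, E k)).toReal +
      (μ (⋃ k, E k)).toReal ^ (((M : ℝ) - 1) / M) *
      (∑ s ∈ powersetCard M univ, (μ (⋂ i ∈ s, E i)).toReal) ^ ((1 : ℝ) / M)) := by
  have hfin {A : Set Ω} (hA : A ⊆ ⋃ k, E k) : μ A ≠ ⊤ := (measure_mono hA).trans_lt hU |>.ne
  have hEfin (k : ι) : μ (E k) ≠ ⊤ := hfin (Set.subset_iUnion E k)
  have hIfin (s) (hs : s ∈ powersetCard M (univ : Finset ι)) : μ (⋂ i ∈ s, E i) ≠ ⊤ := by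
    obtain ⟨i, hi⟩ : s.Nonempty := card_pos.mp <| (mem_powersetCard.mp hs).2 ▸ Nat.pos_of_ne_zero hM
    exact hfin <| (Set.biInter_subset_of_mem hi).trans (Set.subset_iUnion E i)
  have hexp : 0 ≤ ((M : ℝ) - 1) / M :=
    div_nonneg (by simpa [Nat.one_le_iff_ne_zero]) M.cast_nonneg
  have hSfin : ∑ s ∈ powersetCard M univ, μ (⋂ i ∈ s, E i) ≠ ⊤ := sum_ne_top.mpr hIfin
  have hprod : μ (⋃ k, E k) ^ (((M : ℝ) - 1) / M) *
      (∑ s ∈ powersetCard M univ, μ (⋂ i ∈ s, E i)) ^ ((1 : ℝ) / M) ≠ ⊤ :=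
    mul_ne_top (rpow_ne_top_of_nonneg hexp hU.ne)
      (rpow_ne_top_of_nonneg (by positivity) hSfin)
  have h := toReal_mono (by finiteness)
    (sum_measure_le_two_mul_measure_iUnion_add_rpow_sum_measure_iInter μ hM hE)
  simpa only [toReal_sum fun k _ => hEfin k, toReal_mul, toReal_add hU.ne hprod, ← toReal_rpow,
    toReal_sum hIfin, toReal_ofNat, toReal_natCast] using h

end Bound

/-- Bound on the sum of measures in terms of the union and `M`-fold intersections. -/
theorem stmt2 (d M : ℕ) (hM : 2 ≤ M) :
    ∃ C : ℝ, 0 < C ∧ ∀ (K : ℕ) (E : Fin K → Set (Fin d → ℝ)),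
      (∀ k, MeasurableSet (E k)) →
      volume (⋃ k, E k) < ⊤ →
      ∑ k, (volume (E k)).toReal ≤
        C * ((volume (⋃ k, E k)).toReal +
          (volume (⋃ k, E k)).toReal ^ (((M : ℝ) - 1) / M) *
          (∑ s ∈ Finset.powersetCard M (Finset.univ : Finset (Fin K)),
            (volume (⋂ i ∈ s, E i)).toReal) ^ ((1 : ℝ) / M)) := by
  refine ⟨2 * M, by positivity, fun K E hE hU => ?_⟩
  simpa using sum_measure_toReal_le_two_mul_measure_iUnion_add_rpow_sum_measure_iInter
    volume (by omega) hE hU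
end

section
/- Let {E^k} be a finite collection of measurable sets with union E of finite measure. Then Σ_k |E^k| ≤ (1/2)Σ_k |E^k| + (1/2)|E| + 2|E|^{1/2} (Σ_{k_1<k_2} |E^{k_1} ∩ E^{k_2}|)^{1/2}; consequently Σ_k |E^k| ≤ |E| + 4|E|^{1/2}(Σ_{k_1<k_2} |E^{k_1} ∩ E^{k_2}|)^{1/2}. -/
/-!
With `f = ∑ₖ 1_{Eᵏ}` we have `∫ f = ∑ₖ |Eᵏ|` and `∫ f² = ∑_{k₁,k₂} |E^{k₁} ∩ E^{k₂}| = ∑ₖ |Eᵏ| + 2P`,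
where `P = ∑_{k₁<k₂} |E^{k₁} ∩ E^{k₂}|`. Since `f` vanishes off `E`, Cauchy–Schwarz on `E` gives
`(∑ₖ |Eᵏ|)² ≤ |E| (∑ₖ |Eᵏ| + 2P)`, and both bounds follow from this quadratic inequality.
-/

open MeasureTheory

open scoped ENNReal

theorem ENNReal.lintegral_mul_sq_le {α : Type*} [MeasurableSpace α] {μ : Measure α}
    {f g : α → ℝ≥0∞} (hf : AEMeasurable f μ) (hg : AEMeasurable g μ) :
    (∫⁻ a, f a * g a ∂μ) ^ 2 ≤ (∫⁻ a, f a ^ 2 ∂μ) * ∫⁻ a, g a ^ 2 ∂μ := by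
  have h := ENNReal.lintegral_mul_le_Lp_mul_Lq μ Real.HolderConjugate.two_two hf hg
  calc (∫⁻ a, f a * g a ∂μ) ^ 2
      ≤ ((∫⁻ a, f a ^ (2 : ℝ) ∂μ) ^ (1 / 2 : ℝ) * (∫⁻ a, g a ^ (2 : ℝ) ∂μ) ^ (1 / 2 : ℝ)) ^ 2 := by
        gcongr; exact h
    _ = (∫⁻ a, f a ^ 2 ∂μ) * ∫⁻ a, g a ^ 2 ∂μ := by
        simp only [ENNReal.rpow_two, mul_pow, ← ENNReal.rpow_natCast, ← ENNReal.rpow_mul]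
        norm_num

theorem Finset.sum_sum_eq_sum_add_two_nsmul_sum_lt {ι M : Type*} [Fintype ι] [LinearOrder ι]
    [AddCommMonoid M] (a : ι → ι → M) (ha : ∀ i j, a i j = a j i) :
    ∑ i, ∑ j, a i j =
      ∑ i, a i i + 2 • ∑ p ∈ Finset.univ.filter (fun p : ι × ι => p.1 < p.2), a p.1 p.2 := by
  have hsplit : ∀ i j, a i j = (if i < j then a i j else 0) + (if i = j then a i j else 0) +
      (if j < i then a i j else 0) := by
    intro i j
    rcases lt_trichotomy i j with h | rfl | h
    · simp [h, h.ne, h.not_gt]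
    · simp
    · simp [h, h.ne', h.not_gt]
  have hupper : ∑ p ∈ Finset.univ.filter (fun p : ι × ι => p.1 < p.2), a p.1 p.2 =
      ∑ i, ∑ j, if i < j then a i j else 0 := by
    rw [Finset.sum_filter, Fintype.sum_prod_type]
  have hlower : ∑ i, ∑ j, (if j < i then a i j else 0) = ∑ i, ∑ j, if i < j then a i j else 0 := by
    rw [Finset.sum_comm]
    simp_rw [ha]
  rw [Finset.sum_congr rfl fun i _ => Finset.sum_congr rfl fun j _ => hsplit i j]
  simp only [Finset.sum_add_distrib, hlower, hupper, Finset.sum_ite_eq, Finset.mem_univ, if_true]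
  rw [two_nsmul]; abel

theorem le_half_add_half_add_two_sqrt_mul_sqrt {S U P : ℝ} (hU : 0 ≤ U) (hP : 0 ≤ P)
    (h : S ^ 2 ≤ U * (S + 2 * P)) :
    S ≤ 1 / 2 * S + 1 / 2 * U + 2 * √U * √P := by
  -- if `U < S`, then `(S - U)² ≤ S (S - U) ≤ 2 U P`
  have hUP : (√U * √P) ^ 2 = U * P := by rw [mul_pow, Real.sq_sqrt hU, Real.sq_sqrt hP]
  have hUP0 : 0 ≤ √U * √P := by positivity
  nlinarith

theorem Set.sum_indicator_one_sq {α ι R : Type*} [Fintype ι] [CommSemiring R] (E : ι → Set α)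
    (x : α) :
    (∑ k, (E k).indicator (1 : α → R) x) ^ 2 = ∑ i, ∑ j, (E i ∩ E j).indicator 1 x := by
  simp_rw [sq, Finset.sum_mul_sum, Set.inter_indicator_one, Pi.mul_apply]

section IndicatorSum

variable {α ι : Type*} [MeasurableSpace α] {μ : Measure α} [Fintype ι] {E : ι → Set α}

theorem lintegral_sum_indicator_one (hE : ∀ k, MeasurableSet (E k)) :
    ∫⁻ x, ∑ k, (E k).indicator 1 x ∂μ = ∑ k, μ (E k) := by
  rw [lintegral_finsetSum _ fun k _ => measurable_one.indicator (hE k)]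
  simp_rw [lintegral_indicator_one (hE _)]

theorem sq_sum_measure_le_measure_iUnion_mul_sum_sum_inter (hE : ∀ k, MeasurableSet (E k)) :
    (∑ k, μ (E k)) ^ 2 ≤ μ (⋃ k, E k) * ∑ i, ∑ j, μ (E i ∩ E j) := by
  set U := ⋃ k, E k
  have hf : Measurable fun x => ∑ k, (E k).indicator (1 : α → ℝ≥0∞) x :=
    Finset.measurable_sum _ fun k _ => measurable_one.indicator (hE k)
  have hrestrict : ∑ k, μ.restrict U (E k) = ∑ k, μ (E k) := by
    refine Finset.sum_congr rfl fun k _ => ?_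
    rw [Measure.restrict_apply (hE k), Set.inter_eq_left.mpr (Set.subset_iUnion E k)]
  calc (∑ k, μ (E k)) ^ 2
      = (∫⁻ x in U, (∑ k, (E k).indicator 1 x) * 1 ∂μ) ^ 2 := by
        simp_rw [mul_one, lintegral_sum_indicator_one hE, hrestrict]
    _ ≤ (∫⁻ x in U, (∑ k, (E k).indicator 1 x) ^ 2 ∂μ) * ∫⁻ _ in U, 1 ^ 2 ∂μ :=
        ENNReal.lintegral_mul_sq_le hf.aemeasurable aemeasurable_const
    _ ≤ (∫⁻ x, (∑ k, (E k).indicator 1 x) ^ 2 ∂μ) * μ U := by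
        rw [one_pow, setLIntegral_one]
        gcongr
        exact Measure.restrict_le_self
    _ = μ U * ∑ i, ∑ j, μ (E i ∩ E j) := by
        have hinter := lintegral_sum_indicator_one (μ := μ) (E := fun p : ι × ι => E p.1 ∩ E p.2)
          fun p => (hE p.1).inter (hE p.2)
        simp only [Fintype.sum_prod_type] at hinter
        rw [mul_comm]
        simp_rw [Set.sum_indicator_one_sq, hinter]

theorem sq_sum_measureReal_le_measureReal_iUnion_mul_sum_sum_inter
    (hE : ∀ k, MeasurableSet (E k)) (hU : μ (⋃ k, E k) ≠ ∞) :
    (∑ k, μ.real (E k)) ^ 2 ≤ μ.real (⋃ k, E k) * ∑ i, ∑ j, μ.real (E i ∩ E j) := by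
  have hfin : ∀ {s}, s ⊆ ⋃ k, E k → μ s ≠ ∞ := fun hs => measure_ne_top_of_subset hs hU
  have hEfin : ∀ k, μ (E k) ≠ ∞ := fun k => hfin (Set.subset_iUnion E k)
  have hinterfin : ∀ i j, μ (E i ∩ E j) ≠ ∞ := fun i j =>
    hfin (Set.inter_subset_left.trans (Set.subset_iUnion E i))
  have h := ENNReal.toReal_mono
    (ENNReal.mul_ne_top hU (ENNReal.sum_ne_top.mpr fun i _ => ENNReal.sum_ne_top.mpr fun j _ =>
      hinterfin i j))
    (sq_sum_measure_le_measure_iUnion_mul_sum_sum_inter (μ := μ) hE)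
  simpa only [ENNReal.toReal_pow, ENNReal.toReal_mul, ENNReal.toReal_sum fun k _ => hEfin k,
    ENNReal.toReal_sum fun i _ => ENNReal.sum_ne_top.mpr fun j _ => hinterfin i j,
    ENNReal.toReal_sum fun j _ => hinterfin _ j, ← measureReal_def] using h

end IndicatorSum

/-- The `M = 2` case: sum of measures bounded via the union and pairwise intersections. -/
theorem stmt3 (d : ℕ) (K : ℕ) (E : Fin K → Set (Fin d → ℝ))
    (hE : ∀ k, MeasurableSet (E k))
    (hfin : volume (⋃ k, E k) < ⊤) :
    (∑ k, (volume (E k)).toReal ≤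
      (1 / 2) * ∑ k, (volume (E k)).toReal + (1 / 2) * (volume (⋃ k, E k)).toReal +
        2 * Real.sqrt ((volume (⋃ k, E k)).toReal) *
          Real.sqrt (∑ p ∈ Finset.univ.filter (fun p : Fin K × Fin K => p.1 < p.2),
            (volume (E p.1 ∩ E p.2)).toReal)) ∧
    (∑ k, (volume (E k)).toReal ≤
      (volume (⋃ k, E k)).toReal +
        4 * Real.sqrt ((volume (⋃ k, E k)).toReal) *
          Real.sqrt (∑ p ∈ Finset.univ.filter (fun p : Fin K × Fin K => p.1 < p.2),
            (volume (E p.1 ∩ E p.2)).toReal)) := by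
  simp only [← measureReal_def]
  have hsq := sq_sum_measureReal_le_measureReal_iUnion_mul_sum_sum_inter hE hfin.ne
  rw [Finset.sum_sum_eq_sum_add_two_nsmul_sum_lt _ fun i j => by rw [Set.inter_comm]] at hsq
  simp only [Set.inter_self, nsmul_eq_mul, Nat.cast_ofNat] at hsq
  have hhalf := le_half_add_half_add_two_sqrt_mul_sqrt measureReal_nonneg
    (Finset.sum_nonneg fun p _ => measureReal_nonneg) hsq
  exact ⟨hhalf, by linarith⟩
end

section
/- Let P be a polynomial of degree at most N on ℝ^n. Then for every ε ∈ (0,1], the Lebesgue measure of the sublevel set {t ∈ [-1,1]^n : |P(t)| < ε · sup_{[-1,1]^n} |P|} is at most C_N ε^{1/C_N}, where C_N depends only on N and n. -/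
/-!
Let `z` be a point of the cube where `|P|` attains its maximum. Along each ray `r ↦ z + r • ω`
(`‖ω‖ = 1`) the polynomial `P` restricts to a polynomial `q` of degree at most `N` with
`|q 0| = sup |P|`, and the cube meets the ray in a subset of `r ∈ [0, 2]`. A Remez-type inequality
bounds the measure of `{r ∈ [0, 2] : |q r| < ε |q 0|}` by `O_N(ε ^ (1 / N))`, and integrating in
polar coordinates around `z` gives the estimate on the cube.

The one-dimensional inequality comes from Lagrange interpolation: a subset of `ℝ` of measure `m`
contains `N + 1` points pairwise `m / (2N + 2)` apart, and interpolating `q` at such points of the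
sublevel set gives `|q x₀| ≤ (N + 1) (2 (N + 1) (b - a) / m) ^ N ε |q x₀|`.
-/

open MeasureTheory Metric Set Module

theorem exists_finset_card_eq_pairwise_le_dist (S : Set ℝ) {d : ℝ} (hd : 0 < d) (k : ℕ)
    (hS : ENNReal.ofReal (2 * k * d) < volume S) :
    ∃ t : Finset ℝ, t.card = k + 1 ∧ ↑t ⊆ S ∧ (t : Set ℝ).Pairwise fun x y => d ≤ dist x y := by
  induction k generalizing S with
  | zero =>
    obtain ⟨x, hx⟩ := nonempty_of_measure_ne_zero (pos_of_gt hS).ne'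
    exact ⟨{x}, rfl, by simpa using hx, by simp⟩
  | succ k ih =>
    obtain ⟨y, hy⟩ := nonempty_of_measure_ne_zero (pos_of_gt hS).ne'
    have hS' : ENNReal.ofReal (2 * k * d) < volume (S \ ball y d) := by
      refine lt_of_lt_of_le ?_ le_measure_sdiff
      rw [Real.volume_ball, (ENNReal.cancel_of_ne ENNReal.ofReal_ne_top).lt_tsub_iff_right,
        ← ENNReal.ofReal_add (by positivity) (by positivity)]
      convert hS using 2
      push_cast; ring
    obtain ⟨t, htcard, htS, htsep⟩ := ih _ hS'
    have hyt : y ∉ t := fun h => (htS h).2 (mem_ball_self hd)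
    refine ⟨insert y t, by rw [Finset.card_insert_of_notMem hyt, htcard], ?_, ?_⟩
    · rw [Finset.coe_insert]
      exact insert_subset hy (htS.trans sdiff_subset)
    · rw [Finset.coe_insert, pairwise_insert]
      refine ⟨htsep, fun x hx _ => ?_⟩
      have hxy : d ≤ dist x y := not_lt.1 (htS hx).2
      exact ⟨dist_comm x y ▸ hxy, hxy⟩

open Polynomial in
theorem Lagrange.abs_eval_basis_le {t : Finset ℝ} {N : ℕ} (ht : t.card = N + 1) {i : ℝ}
    (hi : i ∈ t) {d D x₀ : ℝ} (hd : 0 < d)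
    (hsep : (t : Set ℝ).Pairwise fun x y => d ≤ dist x y) (hD : ∀ y ∈ t, dist x₀ y ≤ D) :
    |(Lagrange.basis t id i).eval x₀| ≤ (D / d) ^ N := by
  rw [Lagrange.basis, eval_prod, Finset.abs_prod]
  calc ∏ j ∈ t.erase i, |(Lagrange.basisDivisor i j).eval x₀|
      ≤ ∏ _j ∈ t.erase i, D / d := by
        refine Finset.prod_le_prod (fun _ _ => abs_nonneg _) fun j hj => ?_
        have hjt := Finset.mem_of_mem_erase hj
        have hij : d ≤ |i - j| := by
          simpa [Real.dist_eq] using hsep hi hjt (Finset.ne_of_mem_erase hj).symm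
        rw [Lagrange.basisDivisor, eval_mul, eval_C, eval_sub, eval_X, eval_C, abs_mul, abs_inv,
          inv_mul_eq_div, ← Real.dist_eq]
        exact div_le_div₀ (dist_nonneg.trans (hD j hjt)) (hD j hjt) hd hij
    _ = (D / d) ^ N := by
        rw [Finset.prod_const, Finset.card_erase_of_mem hi, ht, Nat.add_sub_cancel]

namespace Polynomial

theorem abs_eval_le_of_pairwise_le_dist {q : ℝ[X]} {N : ℕ} (hq : q.natDegree ≤ N) {t : Finset ℝ}
    (ht : t.card = N + 1) {d D c x₀ : ℝ} (hd : 0 < d)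
    (hsep : (t : Set ℝ).Pairwise fun x y => d ≤ dist x y) (hD : ∀ y ∈ t, dist x₀ y ≤ D)
    (hc : ∀ y ∈ t, |q.eval y| ≤ c) :
    |q.eval x₀| ≤ (N + 1) * (c * (D / d) ^ N) := by
  have hdeg : q.degree < t.card := by
    rw [ht]; exact (degree_le_natDegree).trans_lt (by exact_mod_cast Nat.lt_succ_of_le hq)
  rw [Lagrange.eq_interpolate (v := id) Function.injective_id.injOn hdeg,
    Lagrange.interpolate_apply, eval_finsetSum]
  calc |∑ i ∈ t, (C (q.eval i) * Lagrange.basis t id i).eval x₀|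
      ≤ ∑ i ∈ t, |(C (q.eval i) * Lagrange.basis t id i).eval x₀| := Finset.abs_sum_le_sum_abs _ _
    _ ≤ ∑ _i ∈ t, c * (D / d) ^ N := by
        refine Finset.sum_le_sum fun i hi => ?_
        rw [eval_mul, eval_C, abs_mul]
        exact mul_le_mul (hc i hi) (Lagrange.abs_eval_basis_le ht hi hd hsep hD) (abs_nonneg _)
          ((abs_nonneg _).trans (hc i hi))
    _ = (N + 1) * (c * (D / d) ^ N) := by rw [Finset.sum_const, ht, nsmul_eq_mul]; push_cast; ring

theorem pow_le_of_pairwise_le_dist_of_subset_sublevel {q : ℝ[X]} {N : ℕ}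
    (hq : q.natDegree ≤ N) {a b x₀ : ℝ} (hx₀ : x₀ ∈ Icc a b) {ε : ℝ} (hε : 0 ≤ ε)
    {t : Finset ℝ} (ht : t.card = N + 1) {d : ℝ} (hd : 0 < d)
    (hsep : (t : Set ℝ).Pairwise fun x y => d ≤ dist x y)
    (htS : ↑t ⊆ {x | x ∈ Icc a b ∧ |q.eval x| < ε * |q.eval x₀|}) :
    d ^ N ≤ (N + 1) * ε * (b - a) ^ N := by
  have hbound := abs_eval_le_of_pairwise_le_dist hq ht hd hsep
    (fun y hy => Real.dist_le_of_mem_Icc hx₀ (htS hy).1) (fun y hy => (htS hy).2.le)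
  obtain ⟨y, hy⟩ : t.Nonempty := Finset.card_pos.1 (by omega)
  have hq₀ : 0 < |q.eval x₀| :=
    pos_of_mul_pos_right ((abs_nonneg _).trans_lt (htS hy).2) hε
  have h1 : 1 * |q.eval x₀| ≤ ((N + 1) * ε * ((b - a) / d) ^ N) * |q.eval x₀| := by
    linarith
  have h2 := le_of_mul_le_mul_right h1 hq₀
  rwa [div_pow, mul_div_assoc', le_div_iff₀ (pow_pos hd N), one_mul] at h2

theorem volume_abs_eval_lt_mul_abs_eval_le {q : ℝ[X]} {N : ℕ} (hq : q.natDegree ≤ N)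
    (hN : N ≠ 0) {a b x₀ : ℝ} (hx₀ : x₀ ∈ Icc a b) {ε : ℝ} (hε : 0 ≤ ε) :
    volume {x | x ∈ Icc a b ∧ |q.eval x| < ε * |q.eval x₀|} ≤
      ENNReal.ofReal (2 * (N + 1) ^ 2 * (b - a) * ε ^ (1 / N : ℝ)) := by
  set S := {x | x ∈ Icc a b ∧ |q.eval x| < ε * |q.eval x₀|}
  set R := 2 * (N + 1) ^ 2 * (b - a) * ε ^ (1 / N : ℝ)
  have hab : 0 ≤ b - a := sub_nonneg.2 (hx₀.1.trans hx₀.2)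
  have hR : 0 ≤ R := by positivity
  by_contra! hRS
  have hS_fin : volume S ≠ ⊤ :=
    ((measure_mono fun x hx => hx.1).trans_lt (by simp [Real.volume_Icc])).ne
  set m := (volume S).toReal
  have hRm : R < m := (ENNReal.ofReal_lt_iff_lt_toReal hR hS_fin).1 hRS
  have hm : 0 < m := hR.trans_lt hRm
  set d := m / (2 * (N + 1))
  have hd : 0 < d := by positivity
  obtain ⟨t, ht, htS, hsep⟩ := exists_finset_card_eq_pairwise_le_dist S hd N (by
    rw [← ENNReal.ofReal_toReal hS_fin, ENNReal.ofReal_lt_ofReal_iff hm, mul_div_assoc',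
      div_lt_iff₀ (by positivity)]
    nlinarith)
  have hdN := pow_le_of_pairwise_le_dist_of_subset_sublevel hq hx₀ hε ht hd hsep htS
  have hRN : R ^ N = (2 * (N + 1) ^ 2 * (b - a)) ^ N * ε := by
    rw [mul_pow, ← Real.rpow_natCast (ε ^ _), ← Real.rpow_mul hε, one_div_mul_cancel (by simpa),
      Real.rpow_one]
  have hmN : m ^ N ≤ R ^ N := calc
    m ^ N = (2 * (N + 1)) ^ N * d ^ N := by rw [← mul_pow]; simp only [d]; field_simp
    _ ≤ (2 * (N + 1)) ^ N * ((N + 1) * ε * (b - a) ^ N) := by gcongr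
    _ ≤ (2 * (N + 1)) ^ N * ((N + 1) ^ N * ε * (b - a) ^ N) := by
        gcongr; exact le_self_pow₀ (by linarith) hN
    _ = R ^ N := by rw [hRN]; simp only [mul_pow, ← pow_mul]; ring
  exact hRm.not_ge ((pow_le_pow_iff_left₀ hm.le hR hN).1 hmN)

end Polynomial

theorem measure_le_of_forall_volume_ray_le {E : Type*} [NormedAddCommGroup E] [NormedSpace ℝ E]
    [MeasurableSpace E] [BorelSpace E] [FiniteDimensional ℝ E] (μ : Measure E)
    [μ.IsAddHaarMeasure] {A : Set E} (hA : MeasurableSet A) (hA₀ : (0 : E) ∉ A) {R : ℝ}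
    (hR : ∀ x ∈ A, ‖x‖ ≤ R) {c : ENNReal}
    (hc : ∀ ω ∈ sphere (0 : E) 1, volume {r : ℝ | 0 < r ∧ r • ω ∈ A} ≤ c) :
    μ A ≤ finrank ℝ E * μ (ball 0 1) * (ENNReal.ofReal (R ^ (finrank ℝ E - 1)) * c) := by
  set A' : Set ({0}ᶜ : Set E) := Subtype.val ⁻¹' A
  have hA' : MeasurableSet A' := measurable_subtype_coe hA
  set T := (homeomorphUnitSphereProd E).symm ⁻¹' A'
  have hT : MeasurableSet T := (homeomorphUnitSphereProd E).symm.continuous.measurable hA'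
  have hμA : μ A = (μ.comap Subtype.val) A' := by
    rw [comap_subtype_coe_apply (measurableSet_singleton 0).compl, Subtype.image_preimage_coe,
      inter_eq_right.2 (subset_compl_singleton_iff.2 hA₀)]
  have hfiber : ∀ ω : sphere (0 : E) 1,
      Measure.volumeIoiPow (finrank ℝ E - 1) (Prod.mk ω ⁻¹' T) ≤
        ENNReal.ofReal (R ^ (finrank ℝ E - 1)) * c := by
    intro ω
    set F := Prod.mk ω ⁻¹' T
    have hF : MeasurableSet F := measurable_prodMk_left hT
    have hmem : ∀ r : Ioi (0 : ℝ), r ∈ F ↔ (r : ℝ) • (ω : E) ∈ A := fun r => by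
      simp [F, T, A']
    have hrR : ∀ r ∈ F, (r : ℝ) ≤ R := fun r hr => by
      simpa [norm_smul, abs_of_pos r.2.out] using hR _ ((hmem r).1 hr)
    rw [Measure.volumeIoiPow, withDensity_apply _ hF]
    calc ∫⁻ r in F, ENNReal.ofReal ((r : ℝ) ^ (finrank ℝ E - 1)) ∂(volume.comap Subtype.val)
        ≤ ∫⁻ _ in F, ENNReal.ofReal (R ^ (finrank ℝ E - 1)) ∂(volume.comap Subtype.val) :=
          setLIntegral_mono measurable_const fun r hr =>
            ENNReal.ofReal_le_ofReal (pow_le_pow_left₀ r.2.out.le (hrR r hr) _)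
      _ = ENNReal.ofReal (R ^ (finrank ℝ E - 1)) * volume (Subtype.val '' F) := by
          rw [setLIntegral_const, comap_subtype_coe_apply measurableSet_Ioi]
      _ ≤ ENNReal.ofReal (R ^ (finrank ℝ E - 1)) * c := by
          gcongr
          refine (measure_mono ?_).trans (hc ω ω.2)
          rintro _ ⟨r, hr, rfl⟩
          exact ⟨r.2, (hmem r).1 hr⟩
  calc μ A = (μ.toSphere.prod (Measure.volumeIoiPow (finrank ℝ E - 1))) T := by
        rw [hμA, ← (μ.measurePreserving_homeomorphUnitSphereProd).measure_preimage
          hT.nullMeasurableSet]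
        simp only [T, ← preimage_comp, Homeomorph.symm_comp_self, preimage_id]
    _ = ∫⁻ ω, Measure.volumeIoiPow (finrank ℝ E - 1) (Prod.mk ω ⁻¹' T) ∂μ.toSphere :=
        Measure.prod_apply hT
    _ ≤ ∫⁻ _, ENNReal.ofReal (R ^ (finrank ℝ E - 1)) * c ∂μ.toSphere := lintegral_mono hfiber
    _ = finrank ℝ E * μ (ball 0 1) * (ENNReal.ofReal (R ^ (finrank ℝ E - 1)) * c) := by
        rw [lintegral_const, μ.toSphere_apply_univ, mul_comm]

theorem pi_Icc_neg_one_one_eq_closedBall (ι : Type*) [Fintype ι] :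
    Set.pi univ (fun _ : ι => Icc (-1 : ℝ) 1) = closedBall 0 1 := by
  rw [closedBall_pi _ zero_le_one]
  simp [Real.closedBall_eq_Icc]

namespace MvPolynomial

variable {σ R : Type*} [CommSemiring R]

noncomputable def restrictToLine (P : MvPolynomial σ R) (z v : σ → R) : Polynomial R :=
  aeval (fun i => Polynomial.C (v i) * Polynomial.X + Polynomial.C (z i)) P

theorem eval_restrictToLine (P : MvPolynomial σ R) (z v : σ → R) (r : R) :
    (P.restrictToLine z v).eval r = eval (z + r • v) P := by
  rw [restrictToLine, aeval_def, polynomial_eval_eval₂]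
  congr 1
  · ext; simp
  · ext i
    simp only [Polynomial.eval_add, Polynomial.eval_mul, Polynomial.eval_C, Polynomial.eval_X]
    rw [Pi.add_apply, Pi.smul_apply, smul_eq_mul, mul_comm, add_comm]

theorem natDegree_restrictToLine_le (P : MvPolynomial σ R) (z v : σ → R) :
    (P.restrictToLine z v).natDegree ≤ P.totalDegree :=
  (aeval_natDegree_le P le_rfl _ fun _ => Polynomial.natDegree_linear_le).trans_eq (mul_one _)

theorem volume_abs_eval_add_smul_lt_le {N : ℕ} (hN : N ≠ 0) {P : MvPolynomial σ ℝ}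
    (hP : P.totalDegree ≤ N) (z v : σ → ℝ) {L : ℝ} (hL : 0 ≤ L) {ε : ℝ} (hε : 0 ≤ ε) :
    volume {r | r ∈ Icc 0 L ∧ |eval (z + r • v) P| < ε * |eval z P|} ≤
      ENNReal.ofReal (2 * (N + 1) ^ 2 * L * ε ^ (1 / N : ℝ)) := by
  simpa [eval_restrictToLine] using Polynomial.volume_abs_eval_lt_mul_abs_eval_le
    ((P.natDegree_restrictToLine_le z v).trans hP) hN (left_mem_Icc.2 hL) hε

theorem volume_abs_eval_lt_mul_abs_eval_le {ι : Type*} [Fintype ι] {N : ℕ} (hN : N ≠ 0)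
    {P : MvPolynomial ι ℝ} (hP : P.totalDegree ≤ N) {z : ι → ℝ}
    (hz : z ∈ Set.pi univ fun _ : ι => Icc (-1 : ℝ) 1) {ε : ℝ} (hε : 0 ≤ ε) (hε₁ : ε ≤ 1) :
    volume {t | t ∈ Set.pi univ (fun _ : ι => Icc (-1 : ℝ) 1) ∧
        |eval t P| < ε * |eval z P|} ≤
      ENNReal.ofReal (4 * Fintype.card ι * 4 ^ Fintype.card ι * (N + 1) ^ 2 * ε ^ (1 / N : ℝ)) := by
  rw [pi_Icc_neg_one_one_eq_closedBall] at hz ⊢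
  set A := {x | z + x ∈ closedBall 0 1 ∧ |eval (z + x) P| < ε * |eval z P|}
  have hA : MeasurableSet A :=
    (measurableSet_closedBall.inter
      (measurableSet_lt (continuous_eval P).abs.measurable measurable_const)).preimage
      (measurable_const_add z)
  have hA₀ : (0 : ι → ℝ) ∉ A := fun h => by
    have h₀ : |eval z P| < ε * |eval z P| := by simpa using h.2
    nlinarith [abs_nonneg (eval z P)]
  have hA₂ : ∀ x ∈ A, ‖x‖ ≤ 2 := fun x hx => calc
    ‖x‖ = ‖(z + x) - z‖ := by rw [add_sub_cancel_left]
    _ ≤ ‖z + x‖ + ‖z‖ := norm_sub_le _ _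
    _ ≤ 1 + 1 := add_le_add (mem_closedBall_zero_iff.1 hx.1) (mem_closedBall_zero_iff.1 hz)
    _ = 2 := one_add_one_eq_two
  have hray : ∀ ω ∈ sphere (0 : ι → ℝ) 1, volume {r : ℝ | 0 < r ∧ r • ω ∈ A} ≤
      ENNReal.ofReal (2 * (N + 1) ^ 2 * 2 * ε ^ (1 / N : ℝ)) := fun ω hω => by
    refine (measure_mono ?_).trans (volume_abs_eval_add_smul_lt_le hN hP z ω zero_le_two hε)
    rintro r ⟨hr, hrA⟩
    refine ⟨⟨hr.le, ?_⟩, hrA.2⟩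
    simpa [norm_smul, mem_sphere_zero_iff_norm.1 hω, abs_of_pos hr] using hA₂ _ hrA
  rw [← measure_preimage_add volume z]
  refine (measure_le_of_forall_volume_ray_le volume hA hA₀ hA₂ hray).trans ?_
  rw [finrank_fintype_fun_eq_card, Real.volume_pi_ball _ one_pos, ← ENNReal.ofReal_natCast,
    ← ENNReal.ofReal_mul (by positivity), ← ENNReal.ofReal_mul (by positivity),
    ← ENNReal.ofReal_mul (by positivity)]
  refine ENNReal.ofReal_le_ofReal ?_
  have h2 : (2 : ℝ) ^ (Fintype.card ι - 1) ≤ 2 ^ Fintype.card ι :=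
    pow_le_pow_right₀ one_le_two (Nat.sub_le _ _)
  calc (Fintype.card ι : ℝ) * (2 * 1) ^ Fintype.card ι *
        (2 ^ (Fintype.card ι - 1) * (2 * (N + 1) ^ 2 * 2 * ε ^ (1 / N : ℝ)))
      ≤ Fintype.card ι * 2 ^ Fintype.card ι *
        (2 ^ Fintype.card ι * (2 * (N + 1) ^ 2 * 2 * ε ^ (1 / N : ℝ))) := by
        gcongr
        norm_num
    _ = _ := by rw [show (4 : ℝ) = 2 * 2 by norm_num, mul_pow]; ring

end MvPolynomial

/-- Sublevel set estimate for polynomials of degree at most `N` on the unit cube. -/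
theorem stmt4 (n N : ℕ) :
    ∃ C : ℝ, 0 < C ∧ ∀ (P : MvPolynomial (Fin n) ℝ), P.totalDegree ≤ N →
      ∀ ε : ℝ, 0 < ε → ε ≤ 1 →
      volume {t : Fin n → ℝ |
          t ∈ Set.pi Set.univ (fun _ : Fin n => Set.Icc (-1 : ℝ) 1) ∧
          |MvPolynomial.eval t P| <
            ε * sSup ((fun t => |MvPolynomial.eval t P|) ''
              Set.pi Set.univ (fun _ : Fin n => Set.Icc (-1 : ℝ) 1))} ≤
        ENNReal.ofReal (C * ε ^ (1 / C)) := by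
  set N' := max N 1
  set K : ℝ := 4 * n * 4 ^ n * (N' + 1) ^ 2
  have hN' : (1 : ℝ) ≤ N' := by exact_mod_cast le_max_right N 1
  refine ⟨max K N', by positivity, fun P hP ε hε hε₁ => ?_⟩
  set Q := Set.pi univ fun _ : Fin n => Icc (-1 : ℝ) 1
  obtain ⟨z, hzQ, hz⟩ : sSup ((fun t => |MvPolynomial.eval t P|) '' Q) ∈
      (fun t => |MvPolynomial.eval t P|) '' Q :=
    ((isCompact_univ_pi fun _ => isCompact_Icc).image
      (MvPolynomial.continuous_eval P).abs).sSup_mem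
      ⟨_, 0, fun _ _ => ⟨by norm_num, by norm_num⟩, rfl⟩
  rw [← hz]
  refine (MvPolynomial.volume_abs_eval_lt_mul_abs_eval_le (by positivity)
    (hP.trans (le_max_left N 1)) hzQ hε.le hε₁).trans (ENNReal.ofReal_le_ofReal ?_)
  rw [Fintype.card_fin]
  exact mul_le_mul (le_max_left _ _) (Real.rpow_le_rpow_of_exponent_ge hε hε₁
    (one_div_le_one_div_of_le (by positivity) (le_max_right _ _))) (by positivity) (by positivity)
end

section
/- Let P be a polynomial of degree at most N on ℝ in one variable, with all complex roots lying in the disc {|z| ≤ 2} and leading coefficient 1. Then for ε > 0, the set {t ∈ [-1,1] : |P(t)| < ε · sup_{[-1,1]}|P|} is contained in a union of at most 2N intervals, each of length at most C_N ε^{1/N}. -/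
/-!
On `[-1, 1]` every factor of `|P t| = ∏ |t - wᵢ|` is at most `3`, so `sup |P| ≤ 3 ^ N`. Hence if
`|P t| < ε sup |P| ≤ (3 ε ^ (1/N)) ^ N`, some factor is smaller than `r = 3 ε ^ (1/N)`: `t` lies
within `r` of the real part of some root, and the at most `N` distinct roots give the intervals.
-/

open Polynomial NNReal

namespace Polynomial

variable {K : Type*} [NormedField K] [IsAlgClosed K] {Q : K[X]}

theorem Monic.nnnorm_eval_eq_prod_roots (hQ : Q.Monic) (z : K) :
    ‖Q.eval z‖₊ = (Q.roots.map fun w => ‖z - w‖₊).prod := by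
  rw [(IsAlgClosed.splits Q).eval_eq_prod_roots_of_monic hQ, ← nnnormHom_apply,
    map_multiset_prod, Multiset.map_map]
  rfl

theorem Monic.norm_eval_le_pow_of_forall_roots (hQ : Q.Monic) {z : K} {B : ℝ} (hB : 0 ≤ B)
    (h : ∀ w ∈ Q.roots, ‖z - w‖ ≤ B) : ‖Q.eval z‖ ≤ B ^ Q.natDegree := by
  lift B to ℝ≥0 using hB
  rw [← coe_nnnorm, ← NNReal.coe_pow, NNReal.coe_le_coe, hQ.nnnorm_eval_eq_prod_roots,
    (IsAlgClosed.splits Q).natDegree_eq_card_roots, ← Multiset.card_map (fun w => ‖z - w‖₊)]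
  refine Multiset.prod_le_pow_card _ _ fun x hx => ?_
  obtain ⟨w, hw, rfl⟩ := Multiset.mem_map.1 hx
  exact h w hw

theorem Monic.norm_eval_le_of_norm_roots_le (hQ : Q.Monic) {z : K} {a b : ℝ} (hz : ‖z‖ ≤ a)
    (hb : 0 ≤ b) (h : ∀ w ∈ Q.roots, ‖w‖ ≤ b) : ‖Q.eval z‖ ≤ (a + b) ^ Q.natDegree :=
  hQ.norm_eval_le_pow_of_forall_roots (add_nonneg ((norm_nonneg z).trans hz) hb) fun w hw =>
    (norm_sub_le z w).trans (add_le_add hz (h w hw))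

theorem Monic.exists_mem_roots_norm_sub_lt (hQ : Q.Monic) {z : K} {r : ℝ} (hr : 0 ≤ r)
    (h : ‖Q.eval z‖ < r ^ Q.natDegree) : ∃ w ∈ Q.roots, ‖z - w‖ < r := by
  by_contra! hfar
  lift r to ℝ≥0 using hr
  rw [← coe_nnnorm, ← NNReal.coe_pow, NNReal.coe_lt_coe, hQ.nnnorm_eval_eq_prod_roots,
    (IsAlgClosed.splits Q).natDegree_eq_card_roots, ← Multiset.card_map (fun w => ‖z - w‖₊)] at h
  refine h.not_ge (Multiset.pow_card_le_prod fun x hx => ?_)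
  obtain ⟨w, hw, rfl⟩ := Multiset.mem_map.1 hx
  exact hfar w hw

end Polynomial

theorem norm_eval_map_ofReal (P : ℝ[X]) (t : ℝ) :
    ‖(P.map (algebraMap ℝ ℂ)).eval (t : ℂ)‖ = |P.eval t| := by
  rw [eval_map_algebraMap, ← Complex.coe_algebraMap, aeval_algebraMap_apply_eq_algebraMap_eval,
    Complex.coe_algebraMap, Complex.norm_real, Real.norm_eq_abs]

theorem Finset.exists_Icc_cover_of_norm_ofReal_sub_lt (s : Finset ℂ) (r : ℝ) :
    ∃ a b : Fin s.card → ℝ, (∀ j, b j - a j = 2 * r) ∧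
      {t : ℝ | ∃ w ∈ s, ‖(t : ℂ) - w‖ < r} ⊆ ⋃ j, Set.Icc (a j) (b j) := by
  refine ⟨fun j => (s.equivFin.symm j : ℂ).re - r, fun j => (s.equivFin.symm j : ℂ).re + r,
    fun j => by ring, ?_⟩
  rintro t ⟨w, hw, hwt⟩
  refine Set.mem_iUnion.2 ⟨s.equivFin ⟨w, hw⟩, ?_⟩
  have hre : |t - w.re| < r := by
    simpa using (Complex.abs_re_le_norm ((t : ℂ) - w)).trans_lt hwt
  simp only [Equiv.symm_apply_apply, Set.mem_Icc]
  constructor <;> linarith [abs_lt.1 hre]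

/-- One-dimensional sublevel set estimate: for a monic real polynomial of degree `N` all of whose
complex roots lie in the disc of radius `2`, the sublevel set in `[-1,1]` is covered by at most
`2N` intervals of length `≲ ε^{1/N}`. -/
theorem stmt5 (N : ℕ) (hN : 0 < N) :
    ∃ C : ℝ, 0 < C ∧ ∀ (P : Polynomial ℝ), P.Monic → P.natDegree = N →
      (∀ z : ℂ, (P.map (algebraMap ℝ ℂ)).IsRoot z → ‖z‖ ≤ 2) →
      ∀ ε : ℝ, 0 < ε →
      ∃ (m : ℕ) (a b : Fin m → ℝ), m ≤ 2 * N ∧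
        (∀ j, b j - a j ≤ C * ε ^ ((1 : ℝ) / N)) ∧
        {t ∈ Set.Icc (-1 : ℝ) 1 |
            |P.eval t| < ε * sSup ((fun t => |P.eval t|) '' Set.Icc (-1 : ℝ) 1)} ⊆
          ⋃ j, Set.Icc (a j) (b j) := by
  refine ⟨6, by norm_num, fun P hP hdeg hroots ε hε => ?_⟩
  set Q := P.map (algebraMap ℝ ℂ)
  have hQ : Q.Monic := hP.map _
  have hQdeg : Q.natDegree = N := (hP.natDegree_map _).trans hdeg
  have hQroots : ∀ w ∈ Q.roots, ‖w‖ ≤ 2 := fun w hw => hroots w (isRoot_of_mem_roots hw)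
  have hsup : sSup ((fun t => |P.eval t|) '' Set.Icc (-1 : ℝ) 1) ≤ 3 ^ N := by
    refine Real.sSup_le ?_ (by positivity)
    rintro _ ⟨t, ht, rfl⟩
    have ht' : ‖(t : ℂ)‖ ≤ 1 := by simpa [abs_le] using ht
    have := hQ.norm_eval_le_of_norm_roots_le ht' zero_le_two hQroots
    rwa [norm_eval_map_ofReal, hQdeg, show (1 : ℝ) + 2 = 3 by norm_num] at this
  set r := 3 * ε ^ ((1 : ℝ) / N)
  have hr : 0 ≤ r := by positivity
  have hrN : r ^ N = 3 ^ N * ε := by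
    rw [mul_pow, one_div, Real.rpow_inv_natCast_pow hε.le hN.ne']
  obtain ⟨a, b, hab, hcover⟩ := Q.roots.toFinset.exists_Icc_cover_of_norm_ofReal_sub_lt r
  refine ⟨_, a, b, ?_, fun j => by rw [hab j]; linarith, ?_⟩
  · have := (Multiset.toFinset_card_le Q.roots).trans (card_roots' Q)
    omega
  rintro t ⟨-, hlt⟩
  have hsmall : ‖Q.eval (t : ℂ)‖ < r ^ Q.natDegree := by
    rw [norm_eval_map_ofReal, hQdeg, hrN]
    nlinarith
  obtain ⟨w, hw, hwt⟩ := hQ.exists_mem_roots_norm_sub_lt hr hsmall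
  exact hcover ⟨w, Multiset.mem_toFinset.2 hw, hwt⟩
end

section
/- Let S ⊆ ℝ be a measurable set of finite positive measure contained in a bounded interval I, and let c > 0. Then there exist subintervals J, K ⊆ I such that: (i) |J|, |K|, and dist(K,J) are all comparable with absolute constants; (ii) |S ∩ J| ≥ c'|S|; (iii) |S ∩ K| ≥ c' (|S|/|K|)^c |S|, where c' > 0 depends only on c. -/
open MeasureTheory

def Goal6 (C₀ c' c a b s : ℝ) (S : Set ℝ) : Prop :=
  ∃ j₁ j₂ k₁ k₂ : ℝ, j₁ ≤ j₂ ∧ k₁ ≤ k₂ ∧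
    Set.Icc j₁ j₂ ⊆ Set.Icc a b ∧ Set.Icc k₁ k₂ ⊆ Set.Icc a b ∧
    (k₂ - k₁) ≤ C₀ * (j₂ - j₁) ∧ (j₂ - j₁) ≤ C₀ * (k₂ - k₁) ∧
    sInf (Set.image2 dist (Set.Icc k₁ k₂) (Set.Icc j₁ j₂)) ≤ C₀ * (j₂ - j₁) ∧
    (j₂ - j₁) ≤ C₀ * sInf (Set.image2 dist (Set.Icc k₁ k₂) (Set.Icc j₁ j₂)) ∧
    c' * s ≤ (volume (S ∩ Set.Icc j₁ j₂)).toReal ∧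
    c' * (s / (k₂ - k₁)) ^ c * s ≤ (volume (S ∩ Set.Icc k₁ k₂)).toReal

lemma image2_dist_comm' (X Y : Set ℝ) : Set.image2 dist X Y = Set.image2 dist Y X := by
  rw [Set.image2_swap]
  simp [dist_comm]

lemma infDist_Icc_of_le (p q r t : ℝ) (hpq : p ≤ q) (hqr : q ≤ r) (hrt : r ≤ t) :
    sInf (Set.image2 dist (Set.Icc p q) (Set.Icc r t)) = r - q := by
  have hmem : dist q r ∈ Set.image2 dist (Set.Icc p q) (Set.Icc r t) :=
    Set.mem_image2_of_mem ⟨hpq, le_refl q⟩ ⟨le_refl r, hrt⟩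
  have hqr' : dist q r = r - q := by
    rw [Real.dist_eq, abs_of_nonpos (by linarith)]; ring
  apply le_antisymm
  · exact hqr' ▸ csInf_le ⟨0, fun z hz => by
      rcases hz with ⟨x, hx, y, hy, rfl⟩; exact dist_nonneg⟩ hmem
  · apply le_csInf ⟨_, hmem⟩
    rintro z ⟨x, hx, y, hy, rfl⟩
    rw [Real.dist_eq]
    have h1 : r - q ≤ y - x := by
      have := hx.2; have := hy.1; linarith
    calc r - q ≤ y - x := h1
      _ ≤ |y - x| := le_abs_self _
      _ = |x - y| := abs_sub_comm _ _

set_option maxHeartbeats 4000000 in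
/-- Two-interval approximation lemma: a measurable set `S` in a bounded interval admits intervals
`J`, `K` with comparable lengths and separation, with `J` capturing a fixed proportion of `S` and
`K` capturing a proportion `(|S|/|K|)^c` of `S`. -/
theorem stmt6 :
    ∃ C₀ : ℝ, 0 < C₀ ∧ ∀ c : ℝ, 0 < c → ∃ c' : ℝ, 0 < c' ∧
      ∀ (a b : ℝ) (S : Set ℝ), MeasurableSet S → S ⊆ Set.Icc a b →
        0 < (volume S).toReal →
        ∃ j₁ j₂ k₁ k₂ : ℝ, j₁ ≤ j₂ ∧ k₁ ≤ k₂ ∧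
          Set.Icc j₁ j₂ ⊆ Set.Icc a b ∧ Set.Icc k₁ k₂ ⊆ Set.Icc a b ∧
          (k₂ - k₁) ≤ C₀ * (j₂ - j₁) ∧ (j₂ - j₁) ≤ C₀ * (k₂ - k₁) ∧
          sInf (Set.image2 dist (Set.Icc k₁ k₂) (Set.Icc j₁ j₂)) ≤ C₀ * (j₂ - j₁) ∧
          (j₂ - j₁) ≤ C₀ * sInf (Set.image2 dist (Set.Icc k₁ k₂) (Set.Icc j₁ j₂)) ∧
          c' * (volume S).toReal ≤ (volume (S ∩ Set.Icc j₁ j₂)).toReal ∧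
          c' * ((volume S).toReal / (k₂ - k₁)) ^ c * (volume S).toReal ≤
            (volume (S ∩ Set.Icc k₁ k₂)).toReal := by
  refine ⟨2, by norm_num, ?_⟩
  intro c hc
  have hA0 : 0 < (4/3 : ℝ) ^ c - 1 := by
    have h1 : (1:ℝ) < (4/3 : ℝ) ^ c :=
      Real.one_lt_rpow_iff_of_pos (by norm_num) |>.mpr (Or.inl ⟨by norm_num, hc⟩)
    linarith
  have h4pos : (0:ℝ) < (4:ℝ) ^ c := Real.rpow_pos_of_pos (by norm_num) c
  have h16pos : (0:ℝ) < (16:ℝ) ^ c := Real.rpow_pos_of_pos (by norm_num) c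
  have h16eq : (16:ℝ) ^ c = (4:ℝ) ^ c * (4:ℝ) ^ c := by
    rw [show (16:ℝ) = 4 * 4 by norm_num, Real.mul_rpow (by norm_num) (by norm_num)]
  obtain ⟨c', hc'def⟩ : ∃ y : ℝ, y = min (1/8) (((4/3:ℝ)^c - 1) / (4 * 16 ^ c)) := ⟨_, rfl⟩
  have hc'pos : 0 < c' := by
    rw [hc'def]
    apply lt_min (by norm_num)
    positivity
  have hc'8 : c' ≤ 1/8 := hc'def ▸ min_le_left _ _
  have hc'A : c' ≤ ((4/3:ℝ)^c - 1) / (4 * 16 ^ c) := hc'def ▸ min_le_right _ _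
  refine ⟨c', hc'pos, ?_⟩
  intro a b S hS hsub hpos
  show Goal6 2 c' c a b ((volume S).toReal) S
  obtain ⟨s, hs⟩ : ∃ y : ℝ, y = (volume S).toReal := ⟨_, rfl⟩
  rw [← hs] at hpos ⊢
  obtain ⟨D, hD⟩ : ∃ y : ℝ, y = 1 / (2 * (4:ℝ) ^ c) := ⟨_, rfl⟩
  have hD0 : 0 < D := by rw [hD]; positivity
  have hD4 : D * 4 ^ c = 1/2 := by rw [hD]; field_simp
  have hstepc : D + 2 * c' * 4 ^ c ≤ D * (4/3) ^ c := by
    have h1 : 2 * c' * 4 ^ c ≤ ((4/3:ℝ)^c - 1) / (2 * 4 ^ c) := by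
      have h2 : 2 * ((((4/3:ℝ)^c - 1)) / (4 * 16 ^ c)) * 4 ^ c
          = ((4/3:ℝ)^c - 1) / (2 * 4 ^ c) := by
        rw [h16eq]; field_simp; ring
      nlinarith [mul_le_mul_of_nonneg_right
        (mul_le_mul_of_nonneg_left hc'A (by norm_num : (0:ℝ) ≤ 2)) h4pos.le]
    have h3 : D * (4/3)^c = D * ((4/3:ℝ)^c - 1) + D := by ring
    have h4 : D * ((4/3:ℝ)^c - 1) = ((4/3:ℝ)^c - 1) / (2 * 4 ^ c) := by
      rw [hD]; field_simp
    linarith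
  -- measure helpers
  have hIfin : volume (Set.Icc a b) ≠ ⊤ := by simp [Real.volume_Icc]
  have hfin : ∀ X : Set ℝ, volume (S ∩ X) ≠ ⊤ := fun X =>
    ne_top_of_le_ne_top hIfin (measure_mono (Set.inter_subset_left.trans hsub))
  have hb3 : ∀ X Y Z : Set ℝ, X ⊆ Y ∪ Z →
      (volume (S ∩ X)).toReal ≤ (volume (S ∩ Y)).toReal + (volume (S ∩ Z)).toReal := by
    intro X Y Z hXYZ
    have h1 : volume (S ∩ X) ≤ volume (S ∩ Y) + volume (S ∩ Z) := by
      calc volume (S ∩ X) ≤ volume ((S ∩ Y) ∪ (S ∩ Z)) := by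
            apply measure_mono
            rw [← Set.inter_union_distrib_left]
            exact Set.inter_subset_inter_right S hXYZ
        _ ≤ _ := measure_union_le _ _
    have h2 : volume (S ∩ Y) + volume (S ∩ Z) ≠ ⊤ := by
      simp [ENNReal.add_ne_top, hfin Y, hfin Z]
    have h3 := (ENNReal.toReal_le_toReal (hfin X) h2).mpr h1
    rwa [ENNReal.toReal_add (hfin Y) (hfin Z)] at h3
  have hlen : ∀ p q : ℝ, p ≤ q → (volume (S ∩ Set.Icc p q)).toReal ≤ q - p := by
    intro p q h
    have h1 : volume (S ∩ Set.Icc p q) ≤ ENNReal.ofReal (q - p) := by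
      rw [← Real.volume_Icc]
      exact measure_mono Set.inter_subset_right
    calc (volume (S ∩ Set.Icc p q)).toReal ≤ (ENNReal.ofReal (q - p)).toReal :=
          ENNReal.toReal_mono ENNReal.ofReal_ne_top h1
      _ = q - p := ENNReal.toReal_ofReal (by linarith)
  have hab : a ≤ b := by
    by_contra h
    push_neg at h
    rw [Set.Icc_eq_empty_of_lt h, Set.subset_empty_iff] at hsub
    rw [hs, hsub] at hpos
    simp at hpos
  have hmab : (volume (S ∩ Set.Icc a b)).toReal = s := by
    rw [Set.inter_eq_self_of_subset_left hsub, hs]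
  -- main induction
  have main : ∀ n : ℕ, ∀ u v : ℝ, u + s/2 ≤ v → Set.Icc u v ⊆ Set.Icc a b →
      s * (1 - D * (s / (v - u)) ^ c) ≤ (volume (S ∩ Set.Icc u v)).toReal →
      v - u < (4/3 : ℝ) ^ n * (s/2) → Goal6 2 c' c a b s S := by
    intro n
    induction n with
    | zero => intro u v h1 _ _ h4; rw [pow_zero, one_mul] at h4; linarith
    | succ n ih =>
      intro u v h1 h2 h3 h4
      have hL : s/2 ≤ v - u := by linarith
      have hL0 : 0 < v - u := by linarith
      have hx0 : 0 < (s / (v - u)) := div_pos hpos hL0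
      have hx2 : (s / (v - u)) ≤ 2 := by rw [div_le_iff₀ hL0]; linarith
      have hT0 : 0 ≤ (c' * (4 * (s / (v - u))) ^ c * s) :=
        mul_nonneg (mul_nonneg hc'pos.le
          (Real.rpow_nonneg (mul_nonneg (by norm_num) hx0.le) c)) hpos.le
      have e1 : ((4:ℝ) * (s / (v - u))) ^ c = 4 ^ c * (s / (v - u)) ^ c := Real.mul_rpow (by norm_num) hx0.le
      have hxc0 : (0:ℝ) ≤ (s / (v - u)) ^ c := Real.rpow_nonneg hx0.le c
      have hDx : D * (s / (v - u)) ^ c ≤ 1/2 := by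
        have hxx : (s / (v - u)) ^ c ≤ 4 ^ c := Real.rpow_le_rpow hx0.le (by linarith) hc.le
        have := mul_le_mul_of_nonneg_left hxx hD0.le
        linarith
      have hm_half : s/2 ≤ (volume (S ∩ Set.Icc u v)).toReal := by
        have := mul_le_mul_of_nonneg_left hDx hpos.le
        nlinarith [h3]
      have hcov1 : (volume (S ∩ Set.Icc u v)).toReal ≤ (volume (S ∩ Set.Icc u (u + (v - u)/4))).toReal + (volume (S ∩ Set.Icc (u + (v - u)/4) (u + (v - u)/2))).toReal + (volume (S ∩ Set.Icc (u + (v - u)/2) (u + 3*(v - u)/4))).toReal + (volume (S ∩ Set.Icc (u + 3*(v - u)/4) v)).toReal := by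
        have ha1 : (volume (S ∩ Set.Icc u v)).toReal ≤ (volume (S ∩ Set.Icc u (u + (v - u)/2))).toReal + (volume (S ∩ Set.Icc (u + (v - u)/2) v)).toReal :=
          hb3 _ _ _ Set.Icc_subset_Icc_union_Icc
        have ha2 : (volume (S ∩ Set.Icc u (u + (v - u)/2))).toReal ≤ (volume (S ∩ Set.Icc u (u + (v - u)/4))).toReal + (volume (S ∩ Set.Icc (u + (v - u)/4) (u + (v - u)/2))).toReal :=
          hb3 _ _ _ Set.Icc_subset_Icc_union_Icc
        have ha3 : (volume (S ∩ Set.Icc (u + (v - u)/2) v)).toReal ≤ (volume (S ∩ Set.Icc (u + (v - u)/2) (u + 3*(v - u)/4))).toReal + (volume (S ∩ Set.Icc (u + 3*(v - u)/4) v)).toReal :=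
          hb3 _ _ _ Set.Icc_subset_Icc_union_Icc
        linarith
      have recur : ∀ u' v' : ℝ, u ≤ u' → v' ≤ v → v' - u' ≤ (3/4)*(v - u) →
          (v - u)/2 ≤ v' - u' →
          (volume (S ∩ Set.Icc u v)).toReal ≤ (volume (S ∩ Set.Icc u' v')).toReal + 2*(c' * (4 * (s / (v - u))) ^ c * s) → Goal6 2 c' c a b s S := by
        intro u' v' hu' hv' hsh hsh2 hcov
        have hL'0 : 0 < v' - u' := by linarith
        have hy0 : 0 < (s / (v' - u')) := div_pos hpos hL'0
        have hy1 : (4/3) * (s / (v - u)) ≤ (s / (v' - u')) := by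
          have h5 : s / ((3/4)*(v-u)) ≤ (s / (v' - u')) :=
            div_le_div_of_nonneg_left hpos.le hL'0 hsh
          have h6 : s / ((3/4)*(v-u)) = (4/3) * (s / (v - u)) := by field_simp
          linarith
        have hy4 : (s / (v' - u')) ≤ 4 := by
          have h5 : (s / (v' - u')) ≤ s / ((v-u)/2) :=
            div_le_div_of_nonneg_left hpos.le (by linarith) hsh2
          have h6 : s / ((v-u)/2) = 2 * (s / (v - u)) := by field_simp
          linarith
        have e2 : ((4/3 : ℝ) * (s / (v - u))) ^ c = (4/3) ^ c * (s / (v - u)) ^ c :=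
          Real.mul_rpow (by norm_num) hx0.le
        have hyc : ((4/3 : ℝ) * (s / (v - u))) ^ c ≤ (s / (v' - u')) ^ c :=
          Real.rpow_le_rpow (by positivity) hy1 hc.le
        have key1 : D * (s / (v - u)) ^ c + 2*c'*(4 ^ c * (s / (v - u)) ^ c) ≤ D * (s / (v' - u')) ^ c := by
          have h5 : (D + 2*c'*4 ^ c) * (s / (v - u)) ^ c ≤ (D * (4/3) ^ c) * (s / (v - u)) ^ c :=
            mul_le_mul_of_nonneg_right hstepc hxc0
          have h6 : D * ((4/3 : ℝ) ^ c * (s / (v - u)) ^ c) ≤ D * (s / (v' - u')) ^ c := by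
            rw [← e2]; exact mul_le_mul_of_nonneg_left hyc hD0.le
          nlinarith
        have key2 : s * (D * (s / (v - u)) ^ c + 2*c'*(4 ^ c * (s / (v - u)) ^ c)) ≤ s * (D * (s / (v' - u')) ^ c) :=
          mul_le_mul_of_nonneg_left key1 hpos.le
        rw [e1] at hcov
        have hinv' : s * (1 - D * (s / (v' - u')) ^ c) ≤ (volume (S ∩ Set.Icc u' v')).toReal := by
          nlinarith [h3, hcov, key2]
        have hDy : D * (s / (v' - u')) ^ c ≤ 1/2 := by
          have hyy : (s / (v' - u')) ^ c ≤ 4 ^ c := Real.rpow_le_rpow hy0.le hy4 hc.le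
          have := mul_le_mul_of_nonneg_left hyy hD0.le
          linarith
        have hm'half : s/2 ≤ (volume (S ∩ Set.Icc u' v')).toReal := by
          have := mul_le_mul_of_nonneg_left hDy hpos.le
          nlinarith [hinv']
        have hlen' := hlen u' v' (by linarith)
        apply ih u' v'
        · linarith
        · exact (Set.Icc_subset_Icc hu' hv').trans h2
        · exact hinv'
        · calc v' - u' ≤ (3/4)*(v-u) := hsh
            _ < (3/4)*((4/3)^(n+1)*(s/2)) := by
                have := mul_lt_mul_of_pos_left h4 (by norm_num : (0:ℝ) < 3/4)
                linarith
            _ = (4/3)^n * (s/2) := by rw [pow_succ]; ring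
      have finish : ∀ j₁ j₂ k₁ k₂ : ℝ,
          Set.Icc j₁ j₂ ⊆ Set.Icc u v → Set.Icc k₁ k₂ ⊆ Set.Icc u v →
          j₂ - j₁ = (v - u)/4 → k₂ - k₁ = (v - u)/4 →
          ((j₂ ≤ k₁ ∧ (k₁ - j₂ = (v - u)/4 ∨ k₁ - j₂ = (v - u)/2)) ∨
           (k₂ ≤ j₁ ∧ (j₁ - k₂ = (v - u)/4 ∨ j₁ - k₂ = (v - u)/2))) →
          c' * s ≤ (volume (S ∩ Set.Icc j₁ j₂)).toReal →
          (c' * (4 * (s / (v - u))) ^ c * s) ≤ (volume (S ∩ Set.Icc k₁ k₂)).toReal →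
          Goal6 2 c' c a b s S := by
        intro j₁ j₂ k₁ k₂ hJsub hKsub hJlen hKlen hsep hJm hKm
        have hgap : (v - u)/4 ≤ sInf (Set.image2 dist (Set.Icc k₁ k₂) (Set.Icc j₁ j₂)) ∧
            sInf (Set.image2 dist (Set.Icc k₁ k₂) (Set.Icc j₁ j₂)) ≤ (v - u)/2 := by
          rcases hsep with ⟨hle, hg⟩ | ⟨hle, hg⟩
          · rw [image2_dist_comm',
              infDist_Icc_of_le j₁ j₂ k₁ k₂ (by linarith) hle (by linarith)]
            rcases hg with hg | hg <;> constructor <;> linarith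
          · rw [infDist_Icc_of_le k₁ k₂ j₁ j₂ (by linarith) hle (by linarith)]
            rcases hg with hg | hg <;> constructor <;> linarith
        have hKratio : s / (k₂ - k₁) = 4 * (s / (v - u)) := by
          rw [hKlen, div_div_eq_mul_div]; ring
        unfold Goal6
        refine ⟨j₁, j₂, k₁, k₂, by linarith, by linarith, hJsub.trans h2, hKsub.trans h2,
          by linarith, by linarith, by linarith [hgap.1, hgap.2],
          by linarith [hgap.1, hgap.2], hJm, ?_⟩
        rw [hKratio]
        exact hKm
      have hdis : (volume (S ∩ Set.Icc u v)).toReal/4 ≤ (volume (S ∩ Set.Icc u (u + (v - u)/4))).toReal ∨ (volume (S ∩ Set.Icc u v)).toReal/4 ≤ (volume (S ∩ Set.Icc (u + (v - u)/4) (u + (v - u)/2))).toReal ∨ (volume (S ∩ Set.Icc u v)).toReal/4 ≤ (volume (S ∩ Set.Icc (u + (v - u)/2) (u + 3*(v - u)/4))).toReal ∨ (volume (S ∩ Set.Icc u v)).toReal/4 ≤ (volume (S ∩ Set.Icc (u + 3*(v - u)/4) v)).toReal := by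
        by_contra hcon
        push_neg at hcon
        obtain ⟨hq0, hq1, hq2, hq3⟩ := hcon
        linarith
      have hc's : c' * s ≤ s/8 := by nlinarith [mul_le_mul_of_nonneg_right hc'8 hpos.le]
      rcases hdis with hmax | hmax | hmax | hmax
      · -- J = first quarter
        have hJm : c' * s ≤ (volume (S ∩ Set.Icc u (u + (v - u)/4))).toReal := by linarith
        by_cases hK2 : (c' * (4 * (s / (v - u))) ^ c * s) ≤ (volume (S ∩ Set.Icc (u + (v - u)/2) (u + 3*(v - u)/4))).toReal
        · exact finish u (u + (v - u)/4) (u + (v - u)/2) (u + 3*(v - u)/4) (Set.Icc_subset_Icc (le_refl u) (by linarith))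
            (Set.Icc_subset_Icc (by linarith) (by linarith)) (by linarith) (by linarith)
            (Or.inl ⟨by linarith, Or.inl (by linarith)⟩) hJm hK2
        by_cases hK3 : (c' * (4 * (s / (v - u))) ^ c * s) ≤ (volume (S ∩ Set.Icc (u + 3*(v - u)/4) v)).toReal
        · exact finish u (u + (v - u)/4) (u + 3*(v - u)/4) v (Set.Icc_subset_Icc (le_refl u) (by linarith))
            (Set.Icc_subset_Icc (by linarith) (le_refl v)) (by linarith) (by linarith)
            (Or.inl ⟨by linarith, Or.inr (by linarith)⟩) hJm hK3
        push_neg at hK2 hK3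
        apply recur u (u + (v - u)/2) (le_refl u) (by linarith) (by linarith) (by linarith)
        have ha1 : (volume (S ∩ Set.Icc u v)).toReal ≤ (volume (S ∩ Set.Icc u (u + (v - u)/2))).toReal + (volume (S ∩ Set.Icc (u + (v - u)/2) v)).toReal :=
          hb3 _ _ _ Set.Icc_subset_Icc_union_Icc
        have ha2 : (volume (S ∩ Set.Icc (u + (v - u)/2) v)).toReal ≤ (volume (S ∩ Set.Icc (u + (v - u)/2) (u + 3*(v - u)/4))).toReal + (volume (S ∩ Set.Icc (u + 3*(v - u)/4) v)).toReal :=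
          hb3 _ _ _ Set.Icc_subset_Icc_union_Icc
        linarith
      · -- J = second quarter
        have hJm : c' * s ≤ (volume (S ∩ Set.Icc (u + (v - u)/4) (u + (v - u)/2))).toReal := by linarith
        by_cases hK3 : (c' * (4 * (s / (v - u))) ^ c * s) ≤ (volume (S ∩ Set.Icc (u + 3*(v - u)/4) v)).toReal
        · exact finish (u + (v - u)/4) (u + (v - u)/2) (u + 3*(v - u)/4) v (Set.Icc_subset_Icc (by linarith) (by linarith))
            (Set.Icc_subset_Icc (by linarith) (le_refl v)) (by linarith) (by linarith)
            (Or.inl ⟨by linarith, Or.inl (by linarith)⟩) hJm hK3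
        push_neg at hK3
        apply recur u (u + 3*(v - u)/4) (le_refl u) (by linarith) (by linarith) (by linarith)
        have ha1 : (volume (S ∩ Set.Icc u v)).toReal ≤ (volume (S ∩ Set.Icc u (u + 3*(v - u)/4))).toReal + (volume (S ∩ Set.Icc (u + 3*(v - u)/4) v)).toReal :=
          hb3 _ _ _ Set.Icc_subset_Icc_union_Icc
        linarith
      · -- J = third quarter
        have hJm : c' * s ≤ (volume (S ∩ Set.Icc (u + (v - u)/2) (u + 3*(v - u)/4))).toReal := by linarith
        by_cases hK0 : (c' * (4 * (s / (v - u))) ^ c * s) ≤ (volume (S ∩ Set.Icc u (u + (v - u)/4))).toReal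
        · exact finish (u + (v - u)/2) (u + 3*(v - u)/4) u (u + (v - u)/4) (Set.Icc_subset_Icc (by linarith) (by linarith))
            (Set.Icc_subset_Icc (le_refl u) (by linarith)) (by linarith) (by linarith)
            (Or.inr ⟨by linarith, Or.inl (by linarith)⟩) hJm hK0
        push_neg at hK0
        apply recur (u + (v - u)/4) v (by linarith) (le_refl v) (by linarith) (by linarith)
        have ha1 : (volume (S ∩ Set.Icc u v)).toReal ≤ (volume (S ∩ Set.Icc u (u + (v - u)/4))).toReal + (volume (S ∩ Set.Icc (u + (v - u)/4) v)).toReal :=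
          hb3 _ _ _ Set.Icc_subset_Icc_union_Icc
        linarith
      · -- J = fourth quarter
        have hJm : c' * s ≤ (volume (S ∩ Set.Icc (u + 3*(v - u)/4) v)).toReal := by linarith
        by_cases hK0 : (c' * (4 * (s / (v - u))) ^ c * s) ≤ (volume (S ∩ Set.Icc u (u + (v - u)/4))).toReal
        · exact finish (u + 3*(v - u)/4) v u (u + (v - u)/4) (Set.Icc_subset_Icc (by linarith) (le_refl v))
            (Set.Icc_subset_Icc (le_refl u) (by linarith)) (by linarith) (by linarith)
            (Or.inr ⟨by linarith, Or.inr (by linarith)⟩) hJm hK0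
        by_cases hK1 : (c' * (4 * (s / (v - u))) ^ c * s) ≤ (volume (S ∩ Set.Icc (u + (v - u)/4) (u + (v - u)/2))).toReal
        · exact finish (u + 3*(v - u)/4) v (u + (v - u)/4) (u + (v - u)/2) (Set.Icc_subset_Icc (by linarith) (le_refl v))
            (Set.Icc_subset_Icc (by linarith) (by linarith)) (by linarith) (by linarith)
            (Or.inr ⟨by linarith, Or.inl (by linarith)⟩) hJm hK1
        push_neg at hK0 hK1
        apply recur (u + (v - u)/2) v (by linarith) (le_refl v) (by linarith) (by linarith)
        have ha1 : (volume (S ∩ Set.Icc u v)).toReal ≤ (volume (S ∩ Set.Icc u (u + (v - u)/2))).toReal + (volume (S ∩ Set.Icc (u + (v - u)/2) v)).toReal :=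
          hb3 _ _ _ Set.Icc_subset_Icc_union_Icc
        have ha2 : (volume (S ∩ Set.Icc u (u + (v - u)/2))).toReal ≤ (volume (S ∩ Set.Icc u (u + (v - u)/4))).toReal + (volume (S ∩ Set.Icc (u + (v - u)/4) (u + (v - u)/2))).toReal :=
          hb3 _ _ _ Set.Icc_subset_Icc_union_Icc
        linarith
  -- apply main
  have hsle : s ≤ b - a := by
    have := hlen a b hab
    rw [hmab] at this
    linarith
  obtain ⟨n, hn⟩ := pow_unbounded_of_one_lt ((b - a) / (s/2)) (by norm_num : (1:ℝ) < 4/3)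
  apply main n a b (by linarith) (le_refl _)
  · rw [hmab]
    have hx0 : 0 ≤ D * (s / (b - a)) ^ c :=
      mul_nonneg hD0.le (Real.rpow_nonneg (div_nonneg hpos.le (by linarith)) c)
    nlinarith
  · rw [div_lt_iff₀ (by positivity : (0:ℝ) < s/2)] at hn
    linarith
end

section
/- Let P : ℝ^n → ℝ^n be a polynomial map of degree at most N. Then there is a constant C(n,N) such that for almost every y ∈ P(ℝ^n) (with respect to Lebesgue measure), the fiber P^{-1}(y) has at most C(n,N) elements. -/
/-!
For each coordinate `i`, the `n + 1` polynomials `X i, P 1, …, P n` in `n` variables satisfy a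
nontrivial relation `R_i(x_i, P(x)) = 0` whose degree in `x_i` is bounded in terms of `n` and `N`
only: polynomials of degree `≤ t` in each of `n + 1` variables form a space of dimension
`(t + 1)^(n + 1)`, while their images under `Q ↦ Q(X i, P)` have total degree `≤ (n + 1) t N` and
so lie in a space of dimension at most `((n + 1) t N + 1)^n`, which is smaller for `t` large.
Outside the null set where the leading coefficient of some `R_i` vanishes at `y`, every coordinate
`x_i` of a point of `P⁻¹(y)` is a root of the nonzero polynomial `R_i(·, y)`, so the fiber lies in
a product of `n` sets of at most `t` points.
-/

open MeasureTheory Polynomial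

theorem Nat.mul_pow_add_one_pow_lt {c : ℕ} (hc : 0 < c) (n : ℕ) :
    (c * c ^ n + 1) ^ n < (c ^ n + 1) ^ (n + 1) :=
  calc (c * c ^ n + 1) ^ n ≤ (c * (c ^ n + 1)) ^ n := by gcongr; nlinarith
    _ = c ^ n * (c ^ n + 1) ^ n := mul_pow ..
    _ < (c ^ n + 1) * (c ^ n + 1) ^ n := by gcongr; exact lt_add_one _
    _ = (c ^ n + 1) ^ (n + 1) := (pow_succ' ..).symm

theorem Polynomial.map_ne_zero_of_leadingCoeff_ne_zero {R S : Type*} [Semiring R] [Semiring S]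
    {p : R[X]} (f : R →+* S) (hf : f p.leadingCoeff ≠ 0) : p.map f ≠ 0 :=
  fun h => hf <| by rw [← leadingCoeff_map_of_leadingCoeff_ne_zero f hf, h, leadingCoeff_zero]

theorem Polynomial.finite_and_ncard_le_of_forall_isRoot {ι R : Type*} [Fintype ι] [CommRing R]
    [IsDomain R] {S : Set (ι → R)} {p : ι → R[X]} {t : ℕ} (hp : ∀ i, p i ≠ 0)
    (hdeg : ∀ i, (p i).natDegree ≤ t) (hS : ∀ x ∈ S, ∀ i, (p i).IsRoot (x i)) :
    S.Finite ∧ S.ncard ≤ t ^ Fintype.card ι := by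
  classical
  set T := Fintype.piFinset fun i => (p i).roots.toFinset
  have hST : S ⊆ T := fun x hx => Fintype.mem_piFinset.2 fun i =>
    Multiset.mem_toFinset.2 <| (mem_roots (hp i)).2 (hS x hx i)
  refine ⟨T.finite_toSet.subset hST, (Set.ncard_le_ncard hST T.finite_toSet).trans ?_⟩
  rw [Set.ncard_coe_finset, Fintype.card_piFinset, ← Finset.card_univ]
  exact Finset.prod_le_pow_card _ _ _ fun i _ =>
    (Multiset.toFinset_card_le _).trans <| (card_roots' _).trans (hdeg i)

namespace MvPolynomial

theorem ae_eval_ne_zero {n : ℕ} {p : MvPolynomial (Fin n) ℝ} (hp : p ≠ 0) :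
    ∀ᵐ x : Fin n → ℝ, eval x p ≠ 0 := by
  induction n with
  | zero =>
    obtain ⟨c, rfl⟩ := C_surjective (Fin 0) p
    exact .of_forall fun x => by simpa using hp
  | succ n ih =>
    set q := finSuccEquiv ℝ n p
    have hq : q ≠ 0 := (EmbeddingLike.map_ne_zero_iff).mpr hp
    have hfibre : ∀ᵐ x' : Fin n → ℝ, ∀ᵐ a : ℝ, eval (Fin.cons a x') p ≠ 0 := by
      filter_upwards [ih (leadingCoeff_ne_zero.mpr hq)] with x' hx'
      have hq' := map_ne_zero_of_leadingCoeff_ne_zero (eval x') hx'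
      filter_upwards [(finite_setOfPred_isRoot hq').countable.ae_notMem _] with a ha
      rwa [eval_eq_eval_mv_eval']
    have hmeas : MeasurableSet {z : ℝ × (Fin n → ℝ) | eval (Fin.cons z.1 z.2) p ≠ 0} :=
      (isOpen_ne_fun (continuous_eval p |>.comp (by fun_prop)) continuous_const).measurableSet
    rw [← (volume_preserving_piFinSuccAbove (fun _ => ℝ) 0).symm.map_eq,
      (MeasurableEquiv.measurableEmbedding _).ae_map_iff, Measure.volume_eq_prod]
    simp only [MeasurableEquiv.piFinSuccAbove_symm_apply, Fin.insertNthEquiv, Equiv.coe_fn_mk,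
      Fin.insertNth_zero']
    rwa [Measure.ae_prod_iff_ae_ae hmeas, Measure.ae_ae_comm hmeas]

theorem eval_aeval {R σ ι : Type*} [CommSemiring R] (x : σ → R) (g : ι → MvPolynomial σ R)
    (Q : MvPolynomial ι R) : eval x (aeval g Q) = eval (eval x ∘ g) Q := by
  rw [aeval_eq_bind₁]
  exact eval₂Hom_bind₁ _ _ _ _

variable {K : Type*} [Field K] {σ ι : Type*} [Fintype ι]

theorem finrank_restrictDegree [Fintype σ] (d : ℕ) :
    Module.finrank K (restrictDegree σ K d) = (d + 1) ^ Fintype.card σ := by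
  rw [restrictDegree, Module.finrank_eq_nat_card_basis (basisRestrictSupport K _),
    Nat.card_congr (β := σ → Fin (d + 1)) ?_, Nat.card_fun, Nat.card_eq_fintype_card,
    Nat.card_eq_fintype_card, Fintype.card_fin]
  exact (Finsupp.equivFunOnFinite.subtypeEquiv fun _ => Iff.rfl).trans <|
    Equiv.subtypePiEquivPi.trans <| Equiv.piCongrRight fun _ =>
      (Equiv.subtypeEquivRight fun _ => Nat.lt_succ_iff.symm).trans Fin.equivSubtype.symm

instance [Fintype σ] (d : ℕ) : FiniteDimensional K (restrictDegree σ K d) :=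
  Module.finite_of_finrank_pos <| by rw [finrank_restrictDegree]; positivity

theorem aeval_mem_restrictTotalDegree {R : Type*} [CommRing R] {g : ι → MvPolynomial σ R}
    {D : ℕ} (hg : ∀ j, (g j).totalDegree ≤ D) {t : ℕ} {Q : MvPolynomial ι R}
    (hQ : Q ∈ restrictDegree ι R t) :
    aeval g Q ∈ restrictTotalDegree σ R (Fintype.card ι * t * D) := by
  classical
  suffices (restrictDegree ι R t).map (aeval g).toLinearMap ≤
      restrictTotalDegree σ R (Fintype.card ι * t * D) from this ⟨Q, hQ, rfl⟩
  rw [restrictDegree, restrictSupport_eq_span, Submodule.map_span_le]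
  rintro _ ⟨s, hs, rfl⟩
  rw [mem_restrictTotalDegree, AlgHom.toLinearMap_apply, aeval_monomial, map_one, one_mul,
    Finsupp.prod_fintype _ _ fun _ => pow_zero _]
  calc (∏ j, g j ^ s j).totalDegree ≤ ∑ j, s j * (g j).totalDegree :=
        (totalDegree_finsetProd _ _).trans <| Finset.sum_le_sum fun j _ => totalDegree_pow _ _
    _ ≤ ∑ _j : ι, t * D := Finset.sum_le_sum fun j _ => Nat.mul_le_mul (hs j) (hg j)
    _ = Fintype.card ι * t * D := by
      rw [Finset.sum_const, Finset.card_univ, smul_eq_mul, mul_assoc]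

theorem exists_aeval_eq_zero_of_card_lt [Fintype σ] {g : ι → MvPolynomial σ K} {D t : ℕ}
    (hg : ∀ j, (g j).totalDegree ≤ D)
    (ht : (Fintype.card ι * t * D + 1) ^ Fintype.card σ < (t + 1) ^ Fintype.card ι) :
    ∃ Q ∈ restrictDegree ι K t, Q ≠ 0 ∧ aeval g Q = 0 := by
  let f : restrictDegree ι K t →ₗ[K] restrictDegree σ K (Fintype.card ι * t * D) :=
    (aeval g).toLinearMap.restrict fun _ hQ =>
      restrictTotalDegree_le_restrictDegree σ K _ (aeval_mem_restrictTotalDegree hg hQ)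
  obtain ⟨⟨Q, hQ⟩, hker, hQ0⟩ := Submodule.exists_mem_ne_zero_of_ne_bot <|
    LinearMap.ker_ne_bot_of_finrank_lt (f := f) (by simpa only [finrank_restrictDegree])
  exact ⟨Q, hQ, by simpa using hQ0, by simpa [f, Subtype.ext_iff] using hker⟩

theorem exists_annihilating_polynomial [Fintype σ] {n D : ℕ} (hσ : Fintype.card σ ≤ n)
    (hD : 0 < D) {f : MvPolynomial σ K} {P : Fin n → MvPolynomial σ K}
    (hf : f.totalDegree ≤ D) (hP : ∀ j, (P j).totalDegree ≤ D) :
    ∃ R : Polynomial (MvPolynomial (Fin n) K), R ≠ 0 ∧ R.natDegree ≤ ((n + 1) * D) ^ n ∧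
      ∀ x, (R.map (eval fun j => eval x (P j))).eval (eval x f) = 0 := by
  set t := ((n + 1) * D) ^ n
  have hg : ∀ j, ((Fin.cons f P : Fin (n + 1) → MvPolynomial σ K) j).totalDegree ≤ D :=
    Fin.cases hf hP
  have ht : ((n + 1) * t * D + 1) ^ Fintype.card σ < (t + 1) ^ (n + 1) :=
    calc _ ≤ ((n + 1) * D * t + 1) ^ n := by
          rw [mul_right_comm]; exact Nat.pow_le_pow_right (by omega) hσ
      _ < (t + 1) ^ (n + 1) := Nat.mul_pow_add_one_pow_lt (by positivity) n
  obtain ⟨Q, hQt, hQ0, hQ⟩ := exists_aeval_eq_zero_of_card_lt hg (by simpa using ht)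
  refine ⟨finSuccEquiv K n Q, by simpa using hQ0, ?_, fun x => ?_⟩
  · rw [natDegree_finSuccEquiv, degreeOf_le_iff]
    exact fun s hs => (mem_restrictDegree _ _ _).mp hQt s hs 0
  · rw [← eval_eq_eval_mv_eval', ← Function.comp_def, ← Fin.comp_cons, ← eval_aeval, hQ,
      map_zero]

end MvPolynomial

/-- A polynomial map `P : ℝ^n → ℝ^n` of degree at most `N` has fibers of boundedly many points over
almost every point of its image. -/
theorem stmt9 (n N : ℕ) :
    ∃ C : ℕ, ∀ P : Fin n → MvPolynomial (Fin n) ℝ,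
      (∀ i, (P i).totalDegree ≤ N) →
      ∀ᵐ y : (Fin n → ℝ) ∂volume,
        y ∈ Set.range (fun x i => MvPolynomial.eval x (P i)) →
        ((fun x i => MvPolynomial.eval x (P i)) ⁻¹' {y}).Finite ∧
        ((fun x i => MvPolynomial.eval x (P i)) ⁻¹' {y}).ncard ≤ C := by
  refine ⟨(((n + 1) * max N 1) ^ n) ^ n, fun P hP => ?_⟩
  choose R hR0 hRdeg hR using fun i : Fin n =>
    MvPolynomial.exists_annihilating_polynomial (Fintype.card_fin n).le (by positivity)
      ((MvPolynomial.totalDegree_X i).trans_le (le_max_right N 1))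
      fun j => (hP j).trans (le_max_left N 1)
  filter_upwards [ae_all_iff.2 fun i =>
    MvPolynomial.ae_eval_ne_zero (leadingCoeff_ne_zero.2 (hR0 i))] with y hy _
  simpa using finite_and_ncard_le_of_forall_isRoot (S := _ ⁻¹' {y})
    (fun i => map_ne_zero_of_leadingCoeff_ne_zero _ (hy i))
    (fun i => natDegree_map_le.trans (hRdeg i)) fun x hx i => by
      simpa [← Set.mem_singleton_iff.1 hx] using hR i x
end

section
/- Let θ_0, θ_1, ..., θ_m be real numbers with θ_1 < θ_2 < ... < θ_m, and let A, B_1, ..., B_m ≥ 0. Suppose δ^{θ_0} A ≤ Σ_{i=1}^m δ^{θ_i} B_i for all δ > 0. Then A ≤ C_m ( Σ_{i: θ_i = θ_0} B_i + Σ_{(i,j): θ_i < θ_0 < θ_j} B_i^{(θ_j-θ_0)/(θ_j-θ_i)} B_j^{(θ_0-θ_i)/(θ_j-θ_i)} ), where C_m depends only on m. -/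
/-!
Dividing by `δ ^ θ₀` turns the hypothesis into `A ≤ ∑ᵢ δ ^ (θᵢ - θ₀) * Bᵢ`. The terms with
`θᵢ = θ₀` are constant, those with `θᵢ < θ₀` decrease and those with `θᵢ > θ₀` increase in `δ`.
If all nonzero `Bᵢ` lie on one side of `θ₀`, letting `δ → 0` or `δ → ∞` gives
`A ≤ ∑_{θᵢ = θ₀} Bᵢ`. Otherwise a decreasing term `δ ^ (θᵢ - θ₀) * Bᵢ` and an increasing term
`δ ^ (θⱼ - θ₀) * Bⱼ` agree at their crossing point `(Bᵢ / Bⱼ) ^ (θⱼ - θᵢ)⁻¹`, where both equal the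
geometric mean `Bᵢ ^ ((θⱼ - θ₀) / (θⱼ - θᵢ)) * Bⱼ ^ ((θ₀ - θᵢ) / (θⱼ - θᵢ))`. At the max over `i`
of the min over `j` of the crossing points, every nonconstant term is bounded by one of these
means, so `C = m + 1` works.
-/

open Filter Finset Real Topology

theorem Finset.exists_forall_exists_le_forall_exists_ge {α β γ : Type*} [LinearOrder γ]
    {s : Finset α} {t : Finset β} (hs : s.Nonempty) (ht : t.Nonempty) (d : α → β → γ) :
    ∃ x, (∀ i ∈ s, ∃ j ∈ t, d i j ≤ x) ∧ ∀ j ∈ t, ∃ i ∈ s, x ≤ d i j := by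
  refine ⟨s.sup' hs fun i => t.inf' ht (d i), fun i hi => ?_, fun j hj => ?_⟩
  · obtain ⟨j, hj, hij⟩ := t.exists_mem_eq_inf' ht (d i)
    exact ⟨j, hj, hij ▸ s.le_sup' (fun i => t.inf' ht (d i)) hi⟩
  · obtain ⟨i, hi, hij⟩ := s.exists_mem_eq_sup' hs fun i => t.inf' ht (d i)
    exact ⟨i, hi, hij ▸ t.inf'_le (d i) hj⟩

theorem tendsto_rpow_sub_mul_nhdsGT_zero {t t₀ b : ℝ} (hb : t < t₀ → b = 0) :
    Tendsto (fun δ : ℝ => δ ^ (t - t₀) * b) (𝓝[>] 0) (𝓝 (if t = t₀ then b else 0)) := by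
  rcases lt_trichotomy t t₀ with h | rfl | h
  · simp [hb h, h.ne]
  · simp
  · have h0 : Tendsto (fun δ : ℝ => δ ^ (t - t₀)) (𝓝 0) (𝓝 0) := by
      simpa [zero_rpow (sub_pos.2 h).ne'] using
        (continuousAt_rpow_const 0 (t - t₀) (Or.inr (sub_pos.2 h).le)).tendsto
    simpa [h.ne'] using (h0.mono_left nhdsWithin_le_nhds).mul_const b

theorem tendsto_rpow_sub_mul_atTop {t t₀ b : ℝ} (hb : t₀ < t → b = 0) :
    Tendsto (fun δ : ℝ => δ ^ (t - t₀) * b) atTop (𝓝 (if t = t₀ then b else 0)) := by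
  rcases lt_trichotomy t t₀ with h | rfl | h
  · simpa [h.ne] using (tendsto_rpow_neg_atTop (sub_pos.2 h)).mul_const b
  · simp
  · simp [hb h, h.ne']

section Extraction

variable {ι : Type*} (θ₀ : ℝ) (θ B : ι → ℝ)

noncomputable def straddleMean (i j : ι) : ℝ :=
  B i ^ ((θ j - θ₀) / (θ j - θ i)) * B j ^ ((θ₀ - θ i) / (θ j - θ i))

noncomputable def crossingPoint (i j : ι) : ℝ :=
  (B i / B j) ^ (θ j - θ i)⁻¹

variable {θ₀ θ B}

theorem le_sum_rpow_sub_mul_of_rpow_mul_le [Fintype ι] {A δ : ℝ} (hδ : 0 < δ)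
    (h : δ ^ θ₀ * A ≤ ∑ i, δ ^ θ i * B i) : A ≤ ∑ i, δ ^ (θ i - θ₀) * B i := by
  simp_rw [rpow_sub hδ, div_mul_eq_mul_div, ← sum_div]
  exact (le_div_iff₀' (rpow_pos_of_pos hδ _)).2 h

theorem straddleMean_nonneg (hB : ∀ i, 0 ≤ B i) (i j : ι) : 0 ≤ straddleMean θ₀ θ B i j :=
  mul_nonneg (rpow_nonneg (hB i) _) (rpow_nonneg (hB j) _)

theorem crossingPoint_pos {i j : ι} (hi : 0 < B i) (hj : 0 < B j) : 0 < crossingPoint θ B i j :=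
  rpow_pos_of_pos (div_pos hi hj) _

theorem crossingPoint_rpow_sub_mul {i j : ι} (hij : θ i ≠ θ j) (hi : 0 < B i) (hj : 0 < B j) :
    crossingPoint θ B i j ^ (θ i - θ₀) * B i = straddleMean θ₀ θ B i j ∧
      crossingPoint θ B i j ^ (θ j - θ₀) * B j = straddleMean θ₀ θ B i j := by
  have hji : θ j - θ i ≠ 0 := sub_ne_zero.mpr hij.symm
  unfold crossingPoint straddleMean
  rw [← exp_log hi, ← exp_log hj]
  simp only [← exp_sub, rpow_def_of_pos (exp_pos _), log_exp, ← exp_add]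
  constructor <;> congr 1 <;> field_simp <;> ring

theorem rpow_sub_mul_le_straddleMean_left {i j : ι} (hi : θ i < θ₀) (hj : θ₀ < θ j)
    (hBi : 0 < B i) (hBj : 0 < B j) {δ : ℝ} (hδ : crossingPoint θ B i j ≤ δ) :
    δ ^ (θ i - θ₀) * B i ≤ straddleMean θ₀ θ B i j := by
  rw [← (crossingPoint_rpow_sub_mul (hi.trans hj).ne hBi hBj).1]
  exact mul_le_mul_of_nonneg_right
    (rpow_le_rpow_of_nonpos (crossingPoint_pos hBi hBj) hδ (sub_nonpos.2 hi.le)) hBi.le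

theorem rpow_sub_mul_le_straddleMean_right {i j : ι} (hi : θ i < θ₀) (hj : θ₀ < θ j)
    (hBi : 0 < B i) (hBj : 0 < B j) {δ : ℝ} (hδ₀ : 0 ≤ δ) (hδ : δ ≤ crossingPoint θ B i j) :
    δ ^ (θ j - θ₀) * B j ≤ straddleMean θ₀ θ B i j := by
  rw [← (crossingPoint_rpow_sub_mul (hi.trans hj).ne hBi hBj).2]
  exact mul_le_mul_of_nonneg_right (rpow_le_rpow hδ₀ hδ (sub_nonneg.2 hj.le)) hBj.le

theorem exists_pos_forall_rpow_sub_mul_le_straddleMean [Fintype ι] (hB : ∀ i, 0 ≤ B i)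
    (hN : ∃ i, θ i < θ₀ ∧ B i ≠ 0) (hP : ∃ j, θ₀ < θ j ∧ B j ≠ 0) :
    ∃ δ > 0, ∀ k, θ k ≠ θ₀ →
      ∃ i j, θ i < θ₀ ∧ θ₀ < θ j ∧ δ ^ (θ k - θ₀) * B k ≤ straddleMean θ₀ θ B i j := by
  classical
  set N := univ.filter fun i => θ i < θ₀ ∧ B i ≠ 0
  set P := univ.filter fun j => θ₀ < θ j ∧ B j ≠ 0
  have hpos : ∀ i, B i ≠ 0 → 0 < B i := fun i hi => (hB i).lt_of_ne' hi
  have hNne : N.Nonempty := let ⟨i, hi⟩ := hN; ⟨i, by simpa [N] using hi⟩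
  have hPne : P.Nonempty := let ⟨j, hj⟩ := hP; ⟨j, by simpa [P] using hj⟩
  obtain ⟨δ, hleδ, hδle⟩ :=
    exists_forall_exists_le_forall_exists_ge hNne hPne (crossingPoint θ B)
  obtain ⟨i₀, hi₀⟩ := hNne
  obtain ⟨j₀, hj₀, h₀⟩ := hleδ i₀ hi₀
  simp only [N, P, mem_filter, mem_univ, true_and] at hi₀ hj₀ hleδ hδle
  have hδ : 0 < δ := (crossingPoint_pos (hpos _ hi₀.2) (hpos _ hj₀.2)).trans_le h₀
  refine ⟨δ, hδ, fun k hk => ?_⟩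
  by_cases hBk : B k = 0
  · exact ⟨i₀, j₀, hi₀.1, hj₀.1, by simpa [hBk] using straddleMean_nonneg hB i₀ j₀⟩
  rcases hk.lt_or_gt with hk | hk
  · obtain ⟨j, hj, hkj⟩ := hleδ k ⟨hk, hBk⟩
    exact ⟨k, j, hk, hj.1,
      rpow_sub_mul_le_straddleMean_left hk hj.1 (hpos _ hBk) (hpos _ hj.2) hkj⟩
  · obtain ⟨i, hi, hik⟩ := hδle k ⟨hk, hBk⟩
    exact ⟨i, k, hi.1, hk,
      rpow_sub_mul_le_straddleMean_right hi.1 hk (hpos _ hi.2) (hpos _ hBk) hδ.le hik⟩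

theorem sum_rpow_sub_mul_le [Fintype ι] {δ : ℝ} (hB : ∀ i, 0 ≤ B i) (hδ : ∀ k, θ k ≠ θ₀ →
      ∃ i j, θ i < θ₀ ∧ θ₀ < θ j ∧ δ ^ (θ k - θ₀) * B k ≤ straddleMean θ₀ θ B i j) :
    ∑ k, δ ^ (θ k - θ₀) * B k ≤ ∑ k ∈ univ.filter (θ · = θ₀), B k +
      Fintype.card ι * ∑ p ∈ univ.filter (fun p : ι × ι => θ p.1 < θ₀ ∧ θ₀ < θ p.2),
        straddleMean θ₀ θ B p.1 p.2 := by
  set S := ∑ p ∈ univ.filter (fun p : ι × ι => θ p.1 < θ₀ ∧ θ₀ < θ p.2),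
    straddleMean θ₀ θ B p.1 p.2
  have hS : ∀ k, θ k ≠ θ₀ → δ ^ (θ k - θ₀) * B k ≤ S := fun k hk => by
    obtain ⟨i, j, hi, hj, hk⟩ := hδ k hk
    exact hk.trans <| single_le_sum (f := fun p : ι × ι => straddleMean θ₀ θ B p.1 p.2)
      (fun p _ => straddleMean_nonneg hB p.1 p.2) (a := (i, j)) (by simp [hi, hj])
  rw [← sum_filter_add_sum_filter_not univ (θ · = θ₀)]
  gcongr with k hk
  · rw [(mem_filter.1 hk).2, sub_self, rpow_zero, one_mul]
  · calc _ ≤ #(univ.filter fun k => θ k ≠ θ₀) • S :=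
          sum_le_card_nsmul _ _ _ fun k hk => hS k (mem_filter.1 hk).2
      _ ≤ Fintype.card ι * S := by
          rw [nsmul_eq_mul]
          gcongr
          · exact sum_nonneg fun p _ => straddleMean_nonneg hB p.1 p.2
          · exact_mod_cast card_filter_le _ _

theorem tendsto_sum_rpow_sub_mul_nhdsGT_zero [Fintype ι] (hB : ∀ i, θ i < θ₀ → B i = 0) :
    Tendsto (fun δ : ℝ => ∑ i, δ ^ (θ i - θ₀) * B i) (𝓝[>] 0)
      (𝓝 (∑ i ∈ univ.filter (θ · = θ₀), B i)) := by
  rw [sum_filter]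
  exact tendsto_finsetSum _ fun i _ => tendsto_rpow_sub_mul_nhdsGT_zero (hB i)

theorem tendsto_sum_rpow_sub_mul_atTop [Fintype ι] (hB : ∀ i, θ₀ < θ i → B i = 0) :
    Tendsto (fun δ : ℝ => ∑ i, δ ^ (θ i - θ₀) * B i) atTop
      (𝓝 (∑ i ∈ univ.filter (θ · = θ₀), B i)) := by
  rw [sum_filter]
  exact tendsto_finsetSum _ fun i _ => tendsto_rpow_sub_mul_atTop (hB i)

end Extraction

/-- Two-term extraction: if `δ^{θ₀}A ≤ Σ δ^{θᵢ}Bᵢ` for all `δ > 0`, then `A` is bounded by the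
terms matching `θ₀` plus geometric means of pairs of straddling terms. -/
theorem stmt18 (m : ℕ) :
    ∃ C : ℝ, 0 < C ∧
    ∀ (θ₀ : ℝ) (θ : Fin m → ℝ) (A : ℝ) (B : Fin m → ℝ),
      StrictMono θ → 0 ≤ A → (∀ i, 0 ≤ B i) →
      (∀ δ : ℝ, 0 < δ → δ ^ θ₀ * A ≤ ∑ i, δ ^ (θ i) * B i) →
      A ≤ C * ((∑ i ∈ Finset.univ.filter fun i => θ i = θ₀, B i) +
        ∑ p ∈ Finset.univ.filter (fun p : Fin m × Fin m => θ p.1 < θ₀ ∧ θ₀ < θ p.2),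
          B p.1 ^ ((θ p.2 - θ₀) / (θ p.2 - θ p.1)) *
            B p.2 ^ ((θ₀ - θ p.1) / (θ p.2 - θ p.1))) := by
  refine ⟨m + 1, by positivity, fun θ₀ θ A B _ _ hB h => ?_⟩
  change A ≤ _ * (_ + ∑ p ∈ _, straddleMean θ₀ θ B (p : Fin m × Fin m).1 p.2)
  set Z := ∑ i ∈ univ.filter (θ · = θ₀), B i
  set S := ∑ p ∈ univ.filter (fun p : Fin m × Fin m => θ p.1 < θ₀ ∧ θ₀ < θ p.2),
    straddleMean θ₀ θ B p.1 p.2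
  have hZ : 0 ≤ Z := sum_nonneg fun i _ => hB i
  have hS : 0 ≤ S := sum_nonneg fun p _ => straddleMean_nonneg hB p.1 p.2
  have hmS : 0 ≤ m * S := mul_nonneg m.cast_nonneg hS
  have hA : ∀ δ > 0, A ≤ ∑ i, δ ^ (θ i - θ₀) * B i := fun δ hδ =>
    le_sum_rpow_sub_mul_of_rpow_mul_le hδ (h δ hδ)
  suffices A ≤ Z + m * S by linarith [mul_nonneg m.cast_nonneg hZ]
  by_cases hN : ∃ i, θ i < θ₀ ∧ B i ≠ 0
  · by_cases hP : ∃ j, θ₀ < θ j ∧ B j ≠ 0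
    · obtain ⟨δ, hδ, hδS⟩ := exists_pos_forall_rpow_sub_mul_le_straddleMean hB hN hP
      simpa using (hA δ hδ).trans (sum_rpow_sub_mul_le hB hδS)
    · push Not at hP
      have hAZ := ge_of_tendsto (tendsto_sum_rpow_sub_mul_atTop hP)
        ((eventually_gt_atTop 0).mono hA)
      linarith
  · push Not at hN
    have hAZ := ge_of_tendsto (tendsto_sum_rpow_sub_mul_nhdsGT_zero hN)
      (eventually_mem_nhdsWithin.mono hA)
    linarith
end
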